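/- arXiv:2408.16365 — 6 statements merged into one kernel-verified Lean document; each statement's English description precedes it below -/
import Mathlib

section
/- Let q ≥ 2 be a prime power, let M ≥ 1 and d ≥ 1 be integers, let x ∈ [0,1], and let h = (h_0, h_1, …, h_M) be a probability vector (h_r ≥ 0, ∑_{r=0}^M h_r = 1). Then the following identity holds: ∑_{r=1}^M h_r ∑_{s=0}^{min(d−1, r−1)} C(d−1, s) x^s (1−x)^{d−1−s} ζ_{s+1}^r = ∑_{r=1}^M ( ∑_{s=max(0, d−r)}^{d−1} C(d−1, s) (1−x)^s x^{d−1−s} ) ∑_{k=r}^M (ζ_r^k / q^{k−r}) h_k. Equivalently, 1 − ∑_{r=1}^M h_r ∑_{s=0}^{min(d−1,r−1)} Ω̃(s; d−1, x) ζ_{s+1}^r = 1 − ∑_{r=1}^M I_{1−x}(d−r, r) ∑_{k=r}^M (ζ_r^k / q^{k−r}) h_k. -/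
/-- `ζ_r^m = ∏_{i=0}^{r-1} (1 - q^{-m+i})`, the probability that `r` independently picked
totally random vectors of length `m` over `F_q` are linearly independent. -/
noncomputable def zeta (q r m : ℕ) : ℝ :=
  ∏ i ∈ Finset.range r, (1 - (q : ℝ) ^ ((i : ℤ) - (m : ℤ)))

lemma zeta_succ (q r m : ℕ) :
    zeta q (r + 1) m = zeta q r m * (1 - (q : ℝ) ^ ((r : ℤ) - (m : ℤ))) :=
  Finset.prod_range_succ _ _

lemma zeta_self_succ (q k : ℕ) : zeta q (k + 1) k = 0 := by
  apply Finset.prod_eq_zero (Finset.self_mem_range_succ k)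
  simp

lemma zeta_telescope (q : ℕ) (hq0 : (q : ℝ) ≠ 0) (s k : ℕ) (hsk : s < k) :
    ∑ r ∈ Finset.Icc (s + 1) k, zeta q r k / (q : ℝ) ^ (k - r) = zeta q (s + 1) k := by
  have key : ∀ r ∈ Finset.Icc (s + 1) k,
      zeta q r k / (q : ℝ) ^ (k - r) = zeta q r k - zeta q (r + 1) k := by
    intro r hr
    rw [Finset.mem_Icc] at hr
    rw [zeta_succ]
    have hpow : (q : ℝ) ^ ((r : ℤ) - (k : ℤ)) = ((q : ℝ) ^ (k - r))⁻¹ := by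
      rw [← zpow_natCast (q : ℝ) (k - r), ← zpow_neg]
      congr 1
      omega
    rw [hpow]
    field_simp
    ring
  rw [Finset.sum_congr rfl key]
  rw [show Finset.Icc (s + 1) k = Finset.Ico (s + 1) (k + 1) by rfl,
    Finset.sum_Ico_eq_sum_range]
  have : ∀ i, zeta q (s + 1 + i) k - zeta q (s + 1 + i + 1) k
      = (fun j => zeta q (s + 1 + j) k) i - (fun j => zeta q (s + 1 + j) k) (i + 1) := by
    intro i; simp [Nat.add_assoc]
  rw [Finset.sum_congr rfl fun i _ => this i, Finset.sum_range_sub']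
  have hk : s + 1 + (k + 1 - (s + 1)) = k + 1 := by omega
  simp only [Nat.add_zero, hk, zeta_self_succ, sub_zero]

/-- **Lemma on the regularized incomplete beta function form of the B-CN
update.** For a prime power `q`, integers `M, d ≥ 1`, `x ∈ [0,1]` and a probability vector
`h = (h_0,…,h_M)`,
`∑_{r=1}^M h_r ∑_{s=0}^{min(d−1,r−1)} C(d−1,s) x^s (1−x)^{d−1−s} ζ_{s+1}^r
 = ∑_{r=1}^M (∑_{s=max(0,d−r)}^{d−1} C(d−1,s) (1−x)^s x^{d−1−s}) ∑_{k=r}^M (ζ_r^k/q^{k−r}) h_k`. -/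
theorem bcn_update_beta_identity
    (q M d : ℕ) (hq : IsPrimePow q) (hM : 1 ≤ M) (hd : 1 ≤ d)
    (x : ℝ) (hx0 : 0 ≤ x) (hx1 : x ≤ 1)
    (h : ℕ → ℝ) (hpos : ∀ r, r ≤ M → 0 ≤ h r)
    (hsum : ∑ r ∈ Finset.range (M + 1), h r = 1) :
    ∑ r ∈ Finset.Icc 1 M, h r *
        ∑ s ∈ Finset.range (min (d - 1) (r - 1) + 1),
          (Nat.choose (d - 1) s : ℝ) * x ^ s * (1 - x) ^ (d - 1 - s) * zeta q (s + 1) r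
      = ∑ r ∈ Finset.Icc 1 M,
          (∑ s ∈ Finset.Icc (d - r) (d - 1),
            (Nat.choose (d - 1) s : ℝ) * (1 - x) ^ s * x ^ (d - 1 - s)) *
          ∑ k ∈ Finset.Icc r M, zeta q r k / (q : ℝ) ^ (k - r) * h k := by
  have hq0 : (q : ℝ) ≠ 0 := by
    have := hq.two_le
    positivity
  -- abbreviation for the binomial term
  set B : ℕ → ℝ := fun s => (Nat.choose (d - 1) s : ℝ) * x ^ s * (1 - x) ^ (d - 1 - s) with hB
  -- Step 1: reindex the incomplete-beta sum
  have hbeta : ∀ r ∈ Finset.Icc 1 M,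
      (∑ s ∈ Finset.Icc (d - r) (d - 1),
        (Nat.choose (d - 1) s : ℝ) * (1 - x) ^ s * x ^ (d - 1 - s))
      = ∑ s ∈ Finset.range (min (d - 1) (r - 1) + 1), B s := by
    intro r hr
    rw [Finset.mem_Icc] at hr
    apply Finset.sum_nbij' (fun s => d - 1 - s) (fun s => d - 1 - s)
    · intro a ha
      rw [Finset.mem_Icc] at ha
      rw [Finset.mem_range]
      omega
    · intro a ha
      rw [Finset.mem_range] at ha
      rw [Finset.mem_Icc]
      omega
    · intro a ha
      rw [Finset.mem_Icc] at ha
      omega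
    · intro a ha
      rw [Finset.mem_range] at ha
      omega
    · intro a ha
      rw [Finset.mem_Icc] at ha
      have h1 : d - 1 - (d - 1 - a) = a := by omega
      have h2 : Nat.choose (d - 1) (d - 1 - a) = Nat.choose (d - 1) a :=
        Nat.choose_symm ha.2
      simp only [hB]
      rw [h1, h2]
      ring
  have hrw : ∑ r ∈ Finset.Icc 1 M,
      (∑ s ∈ Finset.Icc (d - r) (d - 1),
        (Nat.choose (d - 1) s : ℝ) * (1 - x) ^ s * x ^ (d - 1 - s)) *
      ∑ k ∈ Finset.Icc r M, zeta q r k / (q : ℝ) ^ (k - r) * h k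
      = ∑ r ∈ Finset.Icc 1 M, (∑ s ∈ Finset.range (min (d - 1) (r - 1) + 1), B s) *
      ∑ k ∈ Finset.Icc r M, zeta q r k / (q : ℝ) ^ (k - r) * h k :=
    Finset.sum_congr rfl fun r hr => by rw [hbeta r hr]
  rw [hrw]
  -- Step 2: push constants inside and swap the (r,k) sums on the RHS
  have step2 :
      ∑ r ∈ Finset.Icc 1 M, (∑ s ∈ Finset.range (min (d - 1) (r - 1) + 1), B s) *
          ∑ k ∈ Finset.Icc r M, zeta q r k / (q : ℝ) ^ (k - r) * h k
      = ∑ k ∈ Finset.Icc 1 M, h k *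
          ∑ r ∈ Finset.Icc 1 k, (∑ s ∈ Finset.range (min (d - 1) (r - 1) + 1), B s) *
            (zeta q r k / (q : ℝ) ^ (k - r)) := by
    simp only [Finset.mul_sum]
    rw [Finset.sum_comm' (t' := Finset.Icc 1 M) (s' := fun k => Finset.Icc 1 k)]
    · apply Finset.sum_congr rfl
      intro k _
      apply Finset.sum_congr rfl
      intro r _
      ring
    · intro r k
      simp only [Finset.mem_Icc]
      omega
  rw [step2]
  -- Step 3: per-k identity via a second swap and the telescoping sum
  apply Finset.sum_congr rfl
  intro k hk
  rw [Finset.mem_Icc] at hk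
  congr 1
  have step3 :
      ∑ r ∈ Finset.Icc 1 k, (∑ s ∈ Finset.range (min (d - 1) (r - 1) + 1), B s) *
          (zeta q r k / (q : ℝ) ^ (k - r))
      = ∑ s ∈ Finset.range (min (d - 1) (k - 1) + 1), B s *
          ∑ r ∈ Finset.Icc (s + 1) k, zeta q r k / (q : ℝ) ^ (k - r) := by
    simp only [Finset.sum_mul, Finset.mul_sum]
    rw [Finset.sum_comm' (t' := Finset.range (min (d - 1) (k - 1) + 1))
      (s' := fun s => Finset.Icc (s + 1) k)]
    intro r s
    simp only [Finset.mem_Icc, Finset.mem_range]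
    omega
  rw [step3]
  apply Finset.sum_congr rfl
  intro s hs
  rw [Finset.mem_range] at hs
  rw [zeta_telescope q hq0 s k (by omega)]
end

section
/- Let q be a prime power, F_q the field with q elements, and let M, n ≥ 1 and r ≥ 0 be integers. Let H be a fixed M×n matrix over F_q with rank(H) = k, let G be chosen uniformly at random from all r×M matrices over F_q, and let g be chosen uniformly at random from F_q^{1×M}, independent of G. Then Pr{ rank(G·H) = r and rank([g; G]·H) = r } = ζ_r^k · q^{−(k−r)}, where [g; G] denotes the (r+1)×M matrix obtained by stacking g on top of G. -/
open Module Submodule LinearMap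

open Module Submodule LinearMap

section Aux

variable {K V W : Type*} [Field K] [AddCommGroup V] [Module K V]
  [AddCommGroup W] [Module K W]

/-- Counting pairs `(g, G)` with `φ∘G` linearly independent and `φ g` in the span. -/
lemma aux_card_pair (φ : V →ₗ[K] W) (r : ℕ) :
    Nat.card {p : V × (Fin r → V) //
        LinearIndependent K (fun i => φ (p.2 i)) ∧
          φ p.1 ∈ span K (Set.range fun i => φ (p.2 i))} =
      Nat.card (({G : Fin r → V // LinearIndependent K (fun i => φ (G i))}
        × ((Fin r → K) × LinearMap.ker φ))) := by
  classical
  symm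
  have hmap : ∀ (x : {G : Fin r → V // LinearIndependent K (fun i => φ (G i))}
      × ((Fin r → K) × LinearMap.ker φ)),
      LinearIndependent K (fun i => φ ((x.1 : Fin r → V) i)) ∧
        φ ((x.2.2 : V) + ∑ i, x.2.1 i • (x.1 : Fin r → V) i) ∈
          span K (Set.range fun i => φ ((x.1 : Fin r → V) i)) := by
    rintro ⟨⟨G, hG⟩, c, z⟩
    refine ⟨hG, ?_⟩
    have hz : φ (z : V) = 0 := LinearMap.mem_ker.mp z.2
    have : φ ((z : V) + ∑ i, c i • G i) = ∑ i, c i • φ (G i) := by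
      simp [hz, map_sum]
    rw [this]
    exact Submodule.sum_mem _ fun i _ =>
      Submodule.smul_mem _ _ (subset_span (Set.mem_range_self i))
  apply Nat.card_eq_of_bijective
    (fun x => ⟨((x.2.2 : V) + ∑ i, x.2.1 i • (x.1 : Fin r → V) i, (x.1 : Fin r → V)),
       hmap x⟩)
  constructor
  · rintro ⟨⟨G, hG⟩, c, z⟩ ⟨⟨G', hG'⟩, c', z'⟩ h
    have h2 : G = G' := congrArg (fun p => p.1.2) h
    subst h2
    have h1 : (z : V) + ∑ i, c i • G i = (z' : V) + ∑ i, c' i • G i :=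
      congrArg (fun p => p.1.1) h
    have hφ : ∑ i, c i • φ (G i) = ∑ i, c' i • φ (G i) := by
      have := congrArg φ h1
      simpa [LinearMap.mem_ker.mp z.2, LinearMap.mem_ker.mp z'.2, map_sum] using this
    have hc : c = c' := by
      funext i
      have h0 : ∑ j, (c j - c' j) • φ (G j) = 0 := by
        simp [sub_smul, Finset.sum_sub_distrib, hφ]
      exact sub_eq_zero.mp (Fintype.linearIndependent_iff.mp hG _ h0 i)
    subst hc
    have hz : z = z' := by
      apply Subtype.ext
      have := h1
      simpa using this
    subst hz
    rfl
  · rintro ⟨⟨g, G⟩, hG, hg⟩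
    obtain ⟨c, hc⟩ := (mem_span_range_iff_exists_fun K).mp hg
    have hker : g - ∑ i, c i • G i ∈ LinearMap.ker φ := by
      rw [LinearMap.mem_ker]
      simp [map_sum, hc]
    refine ⟨⟨⟨G, hG⟩, c, ⟨g - ∑ i, c i • G i, hker⟩⟩, ?_⟩
    apply Subtype.ext
    simp

end Aux

open Module Submodule LinearMap

section Aux2

variable {K V W : Type*} [Field K] [AddCommGroup V] [Module K V]
  [AddCommGroup W] [Module K W]

lemma aux_li_iff (φ : V →ₗ[K] W) {r : ℕ} (v : Fin r → V) :
    LinearIndependent K (fun i => φ (v i)) ↔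
      LinearIndependent K (fun i => φ.rangeRestrict (v i)) := by
  constructor
  · intro h
    exact (LinearMap.linearIndependent_iff ((LinearMap.range φ).subtype)
      (ker_subtype _)).mp h
  · intro h
    exact (LinearMap.linearIndependent_iff ((LinearMap.range φ).subtype)
      (ker_subtype _)).mpr h

lemma aux_card_li (φ : V →ₗ[K] W) (r : ℕ) :
    Nat.card {G : Fin r → V // LinearIndependent K (fun i => φ (G i))} =
      Nat.card ({t : Fin r → LinearMap.range φ // LinearIndependent K t}
        × (Fin r → LinearMap.ker φ)) := by
  classical
  symm
  have hsurj : Function.Surjective φ.rangeRestrict := φ.surjective_rangeRestrict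
  set σ := Function.surjInv hsurj with hσdef
  have hσ' : ∀ y, φ.rangeRestrict (σ y) = y := Function.surjInv_eq hsurj
  have hφσ : ∀ y : LinearMap.range φ, φ (σ y) = (y : W) := fun y =>
    congrArg Subtype.val (hσ' y)
  have key : ∀ (t : Fin r → LinearMap.range φ) (e : Fin r → LinearMap.ker φ),
      (fun i => φ (σ (t i) + (e i : V))) = fun i => ((t i : W)) := by
    intro t e; funext i
    simp [hφσ, LinearMap.mem_ker.mp (e i).2]
  have hmap : ∀ (x : {t : Fin r → LinearMap.range φ // LinearIndependent K t}
      × (Fin r → LinearMap.ker φ)),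
      LinearIndependent K (fun i => φ (σ ((x.1 : Fin r → LinearMap.range φ) i) + (x.2 i : V))) := by
    rintro ⟨⟨t, ht⟩, e⟩
    rw [key t e]
    exact (LinearMap.linearIndependent_iff ((LinearMap.range φ).subtype)
      (ker_subtype _)).mpr ht
  apply Nat.card_eq_of_bijective
    (fun x => ⟨fun i => σ ((x.1 : Fin r → LinearMap.range φ) i) + (x.2 i : V), hmap x⟩)
  constructor
  · rintro ⟨⟨t, ht⟩, e⟩ ⟨⟨t', ht'⟩, e'⟩ h
    have h1 : ∀ i, σ (t i) + (e i : V) = σ (t' i) + (e' i : V) := fun i =>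
      congrFun (congrArg Subtype.val h) i
    have ht2 : t = t' := by
      funext i
      apply Subtype.ext
      have := congrArg φ (h1 i)
      simpa [hφσ, LinearMap.mem_ker.mp (e i).2, LinearMap.mem_ker.mp (e' i).2] using this
    subst ht2
    have he : e = e' := by
      funext i
      apply Subtype.ext
      have := h1 i
      exact add_left_cancel this
    subst he
    rfl
  · rintro ⟨G, hG⟩
    refine ⟨⟨⟨fun i => φ.rangeRestrict (G i), (aux_li_iff φ G).mp hG⟩,
      fun i => ⟨G i - σ (φ.rangeRestrict (G i)), ?_⟩⟩, ?_⟩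
    · rw [LinearMap.mem_ker, map_sub, hφσ]
      simp [sub_eq_zero]
    · apply Subtype.ext
      funext i
      simp

end Aux2




section Aux

variable {K V W : Type*} [Field K] [AddCommGroup V] [Module K V]
  [AddCommGroup W] [Module K W]

lemma finrank_span_insert_iff [FiniteDimensional K W]
    {S : Set W} {x : W} {r : ℕ} (hS : Module.finrank K (span K S) = r) :
    Module.finrank K (span K (insert x S)) = r ↔ x ∈ span K S := by
  constructor
  · intro h
    have hle : span K S ≤ span K (insert x S) := span_mono (Set.subset_insert _ _)
    have heq := Submodule.eq_of_le_of_finrank_eq hle (hS.trans h.symm)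
    rw [heq]
    exact subset_span (Set.mem_insert _ _)
  · intro h
    rw [Submodule.span_insert_eq_span h, hS]

end Aux

/-- Let `H` be a fixed `M × n` matrix over `F_q` with `rank(H) = k`, let
`G` be a uniformly random `r × M` matrix and `g` a uniformly random row vector of length
`M`, independent of `G`.  Then
`Pr{rank(G·H) = r and rank([g; G]·H) = r} = ζ_r^k · q^{−(k−r)}`,
where `[g; G]` stacks `g` on top of `G`.  The probability is expressed as the fraction of
pairs `(g, G)` with this property. -/
theorem first_time_decodable_probability
    (q M n r : ℕ) (hq : IsPrimePow q) (hM : 1 ≤ M) (hn : 1 ≤ n)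
    (F : Type) [Field F] [Fintype F] (hF : Fintype.card F = q)
    (H : Matrix (Fin M) (Fin n) F) (k : ℕ) (hH : H.rank = k) :
    (Nat.card {p : (Fin M → F) × Matrix (Fin r) (Fin M) F //
          (p.2 * H).rank = r ∧ ((Matrix.of (Fin.cons p.1 p.2)) * H).rank = r} : ℝ) /
        (Fintype.card ((Fin M → F) × Matrix (Fin r) (Fin M) F) : ℝ)
      = zeta q r k * (q : ℝ) ^ (-((k : ℤ) - (r : ℤ))) := by
  classical
  have hq0 : 0 < q := hF ▸ Fintype.card_pos
  set φ : (Fin M → F) →ₗ[F] (Fin n → F) := H.vecMulLinear with hφdef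
  have hrange : Module.finrank F (LinearMap.range φ) = k := by
    rw [hφdef, range_vecMulLinear, ← Matrix.rank_eq_finrank_span_row, hH]
  -- rows of a product
  have hrow : ∀ {m : ℕ} (G : Matrix (Fin m) (Fin M) F),
      (fun i => (G * H) i) = fun i => φ (G i) := by
    intro m G
    funext i j
    simp [Matrix.mul_apply, Matrix.vecMul, dotProduct, hφdef]
  -- rank = number of rows iff rows linearly independent
  have hrankLI : ∀ {m : ℕ} (A : Matrix (Fin m) (Fin n) F),
      A.rank = m ↔ LinearIndependent F (fun i => A i) := by
    intro m A
    rw [Matrix.rank_eq_finrank_span_row, linearIndependent_iff_card_eq_finrank_span,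
      Set.finrank, Fintype.card_fin]
    exact eq_comm
  -- the event, abstractly
  have hPQ : ∀ p : (Fin M → F) × Matrix (Fin r) (Fin M) F,
      ((p.2 * H).rank = r ∧ ((Matrix.of (Fin.cons p.1 p.2)) * H).rank = r) ↔
        (LinearIndependent F (fun i => φ (p.2 i)) ∧
          φ p.1 ∈ span F (Set.range fun i => φ (p.2 i))) := by
    intro p
    have h1 : (p.2 * H).rank = r ↔ LinearIndependent F (fun i => φ (p.2 i)) := by
      rw [hrankLI, hrow p.2]
    have hrows : (fun i => ((Matrix.of (Fin.cons p.1 p.2)) * H) i) =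
        Fin.cons (φ p.1) (fun i => φ (p.2 i)) := by
      rw [hrow (Matrix.of (Fin.cons p.1 p.2))]
      funext i
      refine Fin.cases ?_ (fun j => ?_) i <;> rfl
    constructor
    · rintro ⟨ha, hb⟩
      have hLI := h1.mp ha
      refine ⟨hLI, ?_⟩
      have hS : Module.finrank F (span F (Set.range fun i => φ (p.2 i))) = r := by
        rw [finrank_span_eq_card hLI, Fintype.card_fin]
      rw [Matrix.rank_eq_finrank_span_row] at hb
      rw [show Set.range (Matrix.row ((Matrix.of (Fin.cons p.1 p.2)) * H)) =
          insert (φ p.1) (Set.range fun i => φ (p.2 i)) by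
        rw [show Matrix.row ((Matrix.of (Fin.cons p.1 p.2)) * H) =
            fun i => ((Matrix.of (Fin.cons p.1 p.2)) * H) i from rfl, hrows,
          Fin.range_cons]] at hb
      exact (finrank_span_insert_iff hS).mp hb
    · rintro ⟨hLI, hmem⟩
      refine ⟨h1.mpr hLI, ?_⟩
      have hS : Module.finrank F (span F (Set.range fun i => φ (p.2 i))) = r := by
        rw [finrank_span_eq_card hLI, Fintype.card_fin]
      rw [Matrix.rank_eq_finrank_span_row]
      rw [show Set.range (Matrix.row ((Matrix.of (Fin.cons p.1 p.2)) * H)) =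
          insert (φ p.1) (Set.range fun i => φ (p.2 i)) by
        rw [show Matrix.row ((Matrix.of (Fin.cons p.1 p.2)) * H) =
            fun i => ((Matrix.of (Fin.cons p.1 p.2)) * H) i from rfl, hrows,
          Fin.range_cons]]
      exact (finrank_span_insert_iff hS).mpr hmem
  have hNQ : Nat.card {p : (Fin M → F) × Matrix (Fin r) (Fin M) F //
          (p.2 * H).rank = r ∧ ((Matrix.of (Fin.cons p.1 p.2)) * H).rank = r} =
      Nat.card {p : (Fin M → F) × (Fin r → Fin M → F) //
          LinearIndependent F (fun i => φ (p.2 i)) ∧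
            φ p.1 ∈ span F (Set.range fun i => φ (p.2 i))} :=
    Nat.card_congr (Equiv.subtypeEquivRight hPQ)
  -- denominator
  have hD : (Fintype.card ((Fin M → F) × Matrix (Fin r) (Fin M) F)) =
      q ^ M * (q ^ M) ^ r := by
    rw [← Nat.card_eq_fintype_card]
    show Nat.card ((Fin M → F) × (Fin r → Fin M → F)) = _
    rw [Nat.card_prod, Nat.card_fun, Nat.card_fun, Nat.card_fun,
      Nat.card_eq_fintype_card (α := F), hF, Nat.card_eq_fintype_card (α := Fin M),
      Nat.card_eq_fintype_card (α := Fin r), Fintype.card_fin, Fintype.card_fin]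
  have hQ0 : (0:ℝ) < (q:ℝ) := by exact_mod_cast hq0
  have hQne : (q:ℝ) ≠ 0 := ne_of_gt hQ0
  by_cases hrk : r ≤ k
  · -- main case
    set d := Module.finrank F (LinearMap.ker φ) with hd
    have hdk : k + d = M := by
      have h := LinearMap.finrank_range_add_finrank_ker φ
      rwa [hrange, Module.finrank_fintype_fun_eq_card, Fintype.card_fin] at h
    letI : Fintype ↥(LinearMap.ker φ) := Fintype.ofFinite _
    have hcard_ker : Nat.card ↥(LinearMap.ker φ) = q ^ d := by
      rw [Nat.card_eq_fintype_card, Module.card_eq_pow_finrank (K := F), hF]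
    have hcard_li : Nat.card {t : Fin r → ↥(LinearMap.range φ) // LinearIndependent F t} =
        ∏ i ∈ Finset.range r, (q ^ k - q ^ i) := by
      rw [card_linearIndependent (by rw [hrange]; exact hrk), hrange, hF]
      exact Fin.prod_univ_eq_prod_range (fun i => q ^ k - q ^ i) r
    have hN : Nat.card {p : (Fin M → F) × Matrix (Fin r) (Fin M) F //
          (p.2 * H).rank = r ∧ ((Matrix.of (Fin.cons p.1 p.2)) * H).rank = r} =
        (∏ i ∈ Finset.range r, (q ^ k - q ^ i)) * (q ^ d) ^ r * (q ^ r * q ^ d) := by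
      rw [hNQ, aux_card_pair φ r, Nat.card_prod, aux_card_li φ r, Nat.card_prod,
        hcard_li, Nat.card_fun, hcard_ker, Nat.card_eq_fintype_card (α := Fin r),
        Fintype.card_fin, Nat.card_prod, Nat.card_fun, hcard_ker,
        Nat.card_eq_fintype_card (α := F), Nat.card_eq_fintype_card (α := Fin r),
        Fintype.card_fin, hF]
    rw [hN, hD]
    push_cast
    have hprodcast : (∏ i ∈ Finset.range r, ((q ^ k - q ^ i : ℕ) : ℝ))
        = ∏ i ∈ Finset.range r, ((q:ℝ) ^ k - (q:ℝ) ^ i) := by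
      refine Finset.prod_congr rfl fun i hi => ?_
      have hik : i ≤ k := le_trans (le_of_lt (Finset.mem_range.mp hi)) hrk
      rw [Nat.cast_sub (Nat.pow_le_pow_right hq0 hik)]
      push_cast
      ring
    have hconst : ((q:ℝ) ^ k) ^ r = ∏ _i ∈ Finset.range r, ((q:ℝ) ^ k) := by
      rw [Finset.prod_const, Finset.card_range]
    have hfac : ∏ i ∈ Finset.range r, ((q:ℝ) ^ k - (q:ℝ) ^ i)
        = zeta q r k * ((q:ℝ) ^ k) ^ r := by
      rw [zeta, hconst, ← Finset.prod_mul_distrib]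
      refine Finset.prod_congr rfl fun i hi => ?_
      have hz : (q:ℝ) ^ ((i:ℤ) - (k:ℤ)) * (q:ℝ) ^ (k:ℤ) = (q:ℝ) ^ (i:ℤ) := by
        rw [← zpow_add₀ hQne]
        congr 1
        ring
      rw [sub_mul, one_mul]
      rw [← zpow_natCast (q:ℝ) k, hz, zpow_natCast, zpow_natCast]
    have hdk' : (k:ℤ) + (d:ℤ) = (M:ℤ) := by exact_mod_cast hdk
    have hEXP : (((q:ℝ) ^ k) ^ r * ((q:ℝ) ^ d) ^ r * ((q:ℝ) ^ r * (q:ℝ) ^ d))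
        = (q:ℝ) ^ (-((k:ℤ) - (r:ℤ))) * ((q:ℝ) ^ M * ((q:ℝ) ^ M) ^ r) := by
      have l : (((q:ℝ) ^ k) ^ r * ((q:ℝ) ^ d) ^ r * ((q:ℝ) ^ r * (q:ℝ) ^ d))
          = (q:ℝ) ^ (k * r + d * r + r + d) := by
        ring
      have rr : ((q:ℝ) ^ M * ((q:ℝ) ^ M) ^ r) = (q:ℝ) ^ (M + M * r) := by
        ring
      rw [l, rr, ← zpow_natCast (q:ℝ) (k * r + d * r + r + d),
        ← zpow_natCast (q:ℝ) (M + M * r), ← zpow_add₀ hQne]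
      congr 1
      push_cast
      rw [← hdk']
      ring
    rw [hprodcast, hfac, div_eq_iff (by positivity : ((q:ℝ) ^ M * ((q:ℝ) ^ M) ^ r) ≠ 0)]
    linear_combination zeta q r k * hEXP
  · -- r > k : both sides vanish
    have hempty : IsEmpty {p : (Fin M → F) × Matrix (Fin r) (Fin M) F //
          (p.2 * H).rank = r ∧ ((Matrix.of (Fin.cons p.1 p.2)) * H).rank = r} := by
      constructor
      rintro ⟨p, h1, h2⟩
      have hle : (p.2 * H).rank ≤ k := hH ▸ Matrix.rank_mul_le_right p.2 H
      omega
    rw [Nat.card_of_isEmpty]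
    have hz : zeta q r k = 0 := by
      refine Finset.prod_eq_zero (Finset.mem_range.mpr (lt_of_not_ge hrk)) ?_
      simp
    rw [hz]
    simp
end

section
/- Let q be a prime power, let M ≥ 1 and d ≥ 1 be integers, and let h = (h_0, …, h_M) be a probability vector. Define f(x, h) = 1 − ∑_{r=1}^M h_r ∑_{s=0}^{min(d−1, r−1)} C(d−1, s) x^s (1−x)^{d−1−s} ζ_{s+1}^r. Then x ↦ f(x, h) is nondecreasing on [0, 1] (in particular, increasing in x ∈ (0, 1] in the weak sense). -/
/-- The approximate batch-check-node update function of density evolution: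
`f(x, h) = 1 − ∑_{r=1}^M h_r ∑_{s=0}^{min(d−1,r−1)} C(d−1,s) x^s (1−x)^{d−1−s} ζ_{s+1}^r`. -/
noncomputable def fBCN (q M d : ℕ) (h : ℕ → ℝ) (x : ℝ) : ℝ :=
  1 - ∑ r ∈ Finset.Icc 1 M, h r *
    ∑ s ∈ Finset.range (min (d - 1) (r - 1) + 1),
      (Nat.choose (d - 1) s : ℝ) * x ^ s * (1 - x) ^ (d - 1 - s) * zeta q (s + 1) r

/-- Bernstein-type polynomial with coefficients `c`. -/
noncomputable def Bern (n : ℕ) (c : ℕ → ℝ) (x : ℝ) : ℝ :=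
  ∑ s ∈ Finset.range (n + 1), (n.choose s : ℝ) * x ^ s * (1 - x) ^ (n - s) * c s

lemma zeta_eq_zero (q s r : ℕ) (hr : r ≤ s) : zeta q (s + 1) r = 0 := by
  apply Finset.prod_eq_zero (Finset.mem_range.mpr (Nat.lt_succ_of_le hr))
  simp

lemma zeta_nonneg (q : ℕ) (hq : 2 ≤ q) (n r : ℕ) : 0 ≤ zeta q n r := by
  rcases le_or_gt n r with hnr | hnr
  · apply Finset.prod_nonneg
    intro i hi
    have hi' : (i : ℤ) - (r : ℤ) ≤ 0 := by
      have := Finset.mem_range.mp hi; omega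
    have hq1 : (1 : ℝ) ≤ (q : ℝ) := by exact_mod_cast le_trans (by norm_num) hq
    have h1 : (q : ℝ) ^ ((i : ℤ) - (r : ℤ)) ≤ 1 := zpow_le_one_of_nonpos₀ hq1 hi'
    linarith
  · have hn : n = (n - 1) + 1 := by omega
    rw [hn, zeta_eq_zero q (n - 1) r (by omega)]

lemma zeta_anti (q : ℕ) (hq : 2 ≤ q) (s r : ℕ) :
    zeta q (s + 1 + 1) r ≤ zeta q (s + 1) r := by
  have h0 : zeta q (s + 1 + 1) r
      = zeta q (s + 1) r * (1 - (q : ℝ) ^ ((s + 1 : ℕ) - (r : ℤ))) := by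
    unfold zeta
    rw [Finset.prod_range_succ]
  rw [h0]
  have h1 : (0 : ℝ) ≤ (q : ℝ) ^ ((s + 1 : ℕ) - (r : ℤ)) :=
    zpow_nonneg (by positivity) _
  exact mul_le_of_le_one_right (zeta_nonneg q hq (s + 1) r) (by linarith)

lemma Bern_succ (n : ℕ) (c : ℕ → ℝ) (x : ℝ) :
    Bern (n + 1) c x = (1 - x) * Bern n c x + x * Bern n (fun s => c (s + 1)) x := by
  unfold Bern
  rw [Finset.sum_range_succ' (fun s => ((n + 1).choose s : ℝ) * x ^ s * (1 - x) ^ (n + 1 - s) * c s)]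
  rw [Finset.sum_range_succ' (fun s => (n.choose s : ℝ) * x ^ s * (1 - x) ^ (n - s) * c s)]
  have key : ∀ i ∈ Finset.range (n + 1),
      ((n + 1).choose (i + 1) : ℝ) * x ^ (i + 1) * (1 - x) ^ (n + 1 - (i + 1)) * c (i + 1)
      = (1 - x) * ((n.choose (i + 1) : ℝ) * x ^ (i + 1) * (1 - x) ^ (n - (i + 1)) * c (i + 1))
        + x * ((n.choose i : ℝ) * x ^ i * (1 - x) ^ (n - i) * c (i + 1)) := by
    intro i hi
    have hi' : i ≤ n := Nat.lt_succ_iff.mp (Finset.mem_range.mp hi)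
    rcases lt_or_eq_of_le hi' with hlt | heq
    · have h1 : n + 1 - (i + 1) = (n - (i + 1)) + 1 := by omega
      have h2 : n - i = (n - (i + 1)) + 1 := by omega
      rw [h1, h2, Nat.choose_succ_succ]
      push_cast
      ring
    · have h1 : n + 1 - (i + 1) = 0 := by omega
      have h2 : n - (i + 1) = 0 := by omega
      have h3 : n - i = 0 := by omega
      have h4 : n.choose (i + 1) = 0 := Nat.choose_eq_zero_of_lt (by omega)
      have h5 : n.choose i = 1 := by rw [heq]; exact Nat.choose_self n
      rw [Nat.choose_succ_succ, h1, h2, h3, h4, h5]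
      push_cast
      ring
  rw [Finset.sum_congr rfl key, Finset.sum_add_distrib]
  have hsplit : ∑ i ∈ Finset.range (n + 1),
      (1 - x) * ((n.choose (i + 1) : ℝ) * x ^ (i + 1) * (1 - x) ^ (n - (i + 1)) * c (i + 1))
      = (1 - x) * ∑ i ∈ Finset.range n,
          (n.choose (i + 1) : ℝ) * x ^ (i + 1) * (1 - x) ^ (n - (i + 1)) * c (i + 1) := by
    rw [Finset.sum_range_succ, Nat.choose_succ_self]
    rw [Finset.mul_sum]
    push_cast
    ring
  have hsnd : ∑ i ∈ Finset.range (n + 1),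
      x * ((n.choose i : ℝ) * x ^ i * (1 - x) ^ (n - i) * c (i + 1))
      = x * ∑ i ∈ Finset.range (n + 1),
          (n.choose i : ℝ) * x ^ i * (1 - x) ^ (n - i) * c (i + 1) := by
    rw [Finset.mul_sum]
  rw [hsplit, hsnd]
  simp only [Nat.choose_zero_right, pow_zero, Nat.sub_zero]
  push_cast
  ring

lemma Bern_le (n : ℕ) (c c' : ℕ → ℝ) (hcc : ∀ s, c' s ≤ c s) (x : ℝ)
    (hx0 : 0 ≤ x) (hx1 : x ≤ 1) : Bern n c' x ≤ Bern n c x := by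
  apply Finset.sum_le_sum
  intro s _
  have h1 : (0 : ℝ) ≤ 1 - x := by linarith
  have hw : (0 : ℝ) ≤ (n.choose s : ℝ) * x ^ s * (1 - x) ^ (n - s) := by positivity
  exact mul_le_mul_of_nonneg_left (hcc s) hw

lemma Bern_mono : ∀ (n : ℕ) (c : ℕ → ℝ), (∀ s, c (s + 1) ≤ c s) →
    ∀ x y : ℝ, 0 ≤ x → x ≤ y → y ≤ 1 → Bern n c y ≤ Bern n c x := by
  intro n
  induction n with
  | zero => intro c _ x y _ _ _; simp [Bern]
  | succ n ih =>
    intro c hc x y hx hxy hy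
    rw [Bern_succ, Bern_succ]
    have h1 := ih c hc x y hx hxy hy
    have h2 := ih (fun s => c (s + 1)) (fun s => hc (s + 1)) x y hx hxy hy
    have h3 : Bern n (fun s => c (s + 1)) y ≤ Bern n c y :=
      Bern_le n c _ hc y (le_trans hx hxy) hy
    have hx1 : x ≤ 1 := le_trans hxy hy
    nlinarith [mul_nonneg (sub_nonneg.mpr hx1) (sub_nonneg.mpr h1),
      mul_nonneg hx (sub_nonneg.mpr h2),
      mul_nonneg (sub_nonneg.mpr hxy) (sub_nonneg.mpr h3)]

lemma inner_eq (q d r : ℕ) (hd : 1 ≤ d) (x : ℝ) :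
    ∑ s ∈ Finset.range (min (d - 1) (r - 1) + 1),
      (Nat.choose (d - 1) s : ℝ) * x ^ s * (1 - x) ^ (d - 1 - s) * zeta q (s + 1) r
    = Bern (d - 1) (fun s => zeta q (s + 1) r) x := by
  unfold Bern
  apply Finset.sum_subset
  · exact Finset.range_subset_range.mpr (by omega)
  · intro s hs hns
    have h1 : s < d - 1 + 1 := Finset.mem_range.mp hs
    have h2 : ¬ s < min (d - 1) (r - 1) + 1 := fun hh => hns (Finset.mem_range.mpr hh)
    have hrs : r ≤ s := by omega
    rw [zeta_eq_zero q s r hrs, mul_zero]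

/-- For a prime power `q`, integers `M, d ≥ 1` and a probability vector
`h = (h_0,…,h_M)`, the function `x ↦ f(x, h)` is nondecreasing on `[0, 1]`. -/
theorem fBCN_monotone_in_x
    (q M d : ℕ) (hq : IsPrimePow q) (hM : 1 ≤ M) (hd : 1 ≤ d)
    (h : ℕ → ℝ) (hpos : ∀ r, r ≤ M → 0 ≤ h r)
    (hsum : ∑ r ∈ Finset.range (M + 1), h r = 1) :
    ∀ x y : ℝ, 0 ≤ x → x ≤ y → y ≤ 1 → fBCN q M d h x ≤ fBCN q M d h y := by
  intro x y hx hxy hy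
  have hq2 : 2 ≤ q := hq.two_le
  unfold fBCN
  apply sub_le_sub_left
  apply Finset.sum_le_sum
  intro r hr
  obtain ⟨hr1, hrM⟩ := Finset.mem_Icc.mp hr
  rw [inner_eq q d r hd x, inner_eq q d r hd y]
  exact mul_le_mul_of_nonneg_left
    (Bern_mono (d - 1) (fun s => zeta q (s + 1) r) (fun s => zeta_anti q hq2 s r) x y hx hxy hy)
    (hpos r hrM)
end

section
/- Fix a prime power q, an integer M ≥ 1, and a protomatrix B = [b_{i,j}] with n_c = n_c^{(1)} + n_c^{(2)} rows and n_v columns whose entries are nonnegative integers; let d_{c_i} = ∑_{j=1}^{n_v} b_{i,j}. For a probability vector h = (h_0,…,h_M), define the density-evolution sequences by: x_{i,j}^{(0)}(h) = 1 for all i, j; and for ℓ ≥ 1, (i) for 1 ≤ i ≤ n_c^{(1)} (LDPC check rows): y_{i,j}^{(ℓ)}(h) = 1 − (∏_{j′ ≠ j} (1 − x_{i,j′}^{(ℓ−1)}(h))^{b_{i,j′}}) · (1 − x_{i,j}^{(ℓ−1)}(h))^{b_{i,j}−1}; (ii) for n_c^{(1)} < i ≤ n_c (batch rows): y_{i,j}^{(ℓ)}(h)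 = 1 − ∑_{r=1}^{M} h_r ∑_{s=0}^{min(d_{c_i}−1, r−1)} Ω(i, j, s, x_i^{(ℓ−1)}(h)) ζ_{s+1}^r; (iii) x_{i,j}^{(ℓ)}(h) = (∏_{i′ ≠ i} (y_{i′,j}^{(ℓ)}(h))^{b_{i′,j}}) · (y_{i,j}^{(ℓ)}(h))^{b_{i,j}−1}; and the a posteriori erasure probability z_j^{(ℓ)}(h) = ∏_{i=1}^{n_c} (y_{i,j}^{(ℓ)}(h))^{b_{i,j}} (all updates taken over indices with b_{i,j} > 0, with x_{i,j}^{(ℓ)} = y_{i,j}^{(ℓ)} = 1 whenever b_{i,j} = 0). Then for any two probability vectors h, h′ with h′ ⪯ h, for every ℓ ≥ 1 and all (i, j): x_{i,j}^{(ℓ)}(h) ≤ x_{i,j}^{(ℓ)}(h′), y_{i,j}^{(ℓ)}(h) ≤ y_{i,j}^{(ℓ)}(h′), and z_j^{(ℓ)}(h) ≤ z_j^{(ℓ)}(h′). Consequently, if z_j^{(ℓ)}(h′) → 0 as ℓ → ∞ for all j = 1,…,n_v, then z_j^{(ℓ)}(h) → 0 as ℓ → ∞ for all j. -/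
/-- `Ω(j, s, x)` for a row `b` of the protomatrix: the probability that `s` of the `d−1`
incoming messages of a batch check node are erased. -/
noncomputable def OmegaBCN {nv : ℕ} (b : Fin nv → ℕ) (j : Fin nv) (s : ℕ)
    (x : Fin nv → ℝ) : ℝ :=
  ∑ k : (∀ t : Fin nv, Fin ((if t = j then b t - 1 else b t) + 1)),
    if (∑ t, ((k t : ℕ))) = s then
      ∏ t, ((Nat.choose (if t = j then b t - 1 else b t) (k t : ℕ) : ℝ) *
        x t ^ (k t : ℕ) * (1 - x t) ^ ((if t = j then b t - 1 else b t) - (k t : ℕ)))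
    else 0

/-- The density-evolution recursion of a protograph-based batched network code with
protomatrix `b` (`nc1` LDPC check rows followed by batch rows), rank distribution `h`,
batch size `M`, field size `q`.  `X ℓ i j` and `Y ℓ i j` are the variable-to-check and
check-to-variable erasure probabilities on type-`(i,j)` edges at iteration `ℓ`, and
`Z ℓ j` is the a posteriori erasure probability of a type-`j` variable node. -/
def DESystem (q M : ℕ) {nc nv : ℕ} (nc1 : ℕ) (b : Fin nc → Fin nv → ℕ) (h : ℕ → ℝ)
    (X Y : ℕ → Fin nc → Fin nv → ℝ) (Z : ℕ → Fin nv → ℝ) : Prop :=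
  -- initialization
  (∀ i j, X 0 i j = 1) ∧
  -- edges absent from the protograph carry erasure probability 1
  (∀ ℓ i j, b i j = 0 → X ℓ i j = 1 ∧ Y ℓ i j = 1) ∧
  -- LDPC check-node update (rows `i < nc1`)
  (∀ ℓ (i : Fin nc) (j : Fin nv), 0 < b i j → (i : ℕ) < nc1 →
    Y (ℓ + 1) i j =
      1 - (∏ j' ∈ Finset.univ.erase j, (1 - X ℓ i j') ^ b i j') *
        (1 - X ℓ i j) ^ (b i j - 1)) ∧
  -- batch check-node update (rows `i ≥ nc1`)
  (∀ ℓ (i : Fin nc) (j : Fin nv), 0 < b i j → nc1 ≤ (i : ℕ) →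
    Y (ℓ + 1) i j =
      1 - ∑ r ∈ Finset.Icc 1 M, h r *
        ∑ s ∈ Finset.range (min ((∑ j', b i j') - 1) (r - 1) + 1),
          OmegaBCN (b i) j s (X ℓ i) * zeta q (s + 1) r) ∧
  -- variable-node update
  (∀ ℓ (i : Fin nc) (j : Fin nv), 0 < b i j →
    X (ℓ + 1) i j =
      (∏ i' ∈ Finset.univ.erase i, (Y (ℓ + 1) i' j) ^ b i' j) *
        (Y (ℓ + 1) i j) ^ (b i j - 1)) ∧
  -- a posteriori erasure probability
  (∀ ℓ (j : Fin nv), Z (ℓ + 1) j = ∏ i, (Y (ℓ + 1) i j) ^ b i j)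

open Finset

namespace DEProof

/-! ### Binomial weights and Bernstein sums -/

noncomputable def W (n k : ℕ) (p : ℝ) : ℝ := (n.choose k : ℝ) * p ^ k * (1 - p) ^ (n - k)

lemma W_nonneg {p : ℝ} (h0 : 0 ≤ p) (h1 : p ≤ 1) (n k : ℕ) : 0 ≤ W n k p :=
  mul_nonneg (mul_nonneg (by positivity) (pow_nonneg h0 _)) (pow_nonneg (by linarith) _)

lemma sum_W (n : ℕ) (p : ℝ) : ∑ k ∈ range (n + 1), W n k p = 1 := by
  calc ∑ k ∈ range (n + 1), W n k p
      = ∑ k ∈ range (n + 1), p ^ k * (1 - p) ^ (n - k) * ((n.choose k : ℕ) : ℝ) := by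
        apply Finset.sum_congr rfl; intro k _; unfold W; ring
    _ = (p + (1 - p)) ^ n := (add_pow p (1 - p) n).symm
    _ = 1 := by norm_num

noncomputable def Bern (n : ℕ) (p : ℝ) (g : ℕ → ℝ) : ℝ := ∑ k ∈ range (n + 1), W n k p * g k

lemma Bern_succ (n : ℕ) (p : ℝ) (g : ℕ → ℝ) :
    Bern (n + 1) p g = (1 - p) * Bern n p g + p * Bern n p (fun k => g (k + 1)) := by
  unfold Bern
  rw [Finset.mul_sum, Finset.mul_sum, Finset.sum_range_succ' (fun k => W (n+1) k p * g k) (n+1)]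
  rw [Finset.sum_range_succ (fun k => W (n+1) (k+1) p * g (k+1)) n]
  rw [Finset.sum_range_succ' (fun k => (1-p) * (W n k p * g k)) n]
  rw [Finset.sum_range_succ (fun k => p * (W n k p * g (k+1))) n]
  have h1 : ∑ k ∈ range n, W (n+1) (k+1) p * g (k+1)
      = ∑ k ∈ range n, ((1-p) * (W n (k+1) p * g (k+1)) + p * (W n k p * g (k+1))) := by
    apply Finset.sum_congr rfl
    intro k hk
    have hk' : k < n := Finset.mem_range.mp hk
    have hc : ((n+1).choose (k+1) : ℝ) = n.choose k + n.choose (k+1) := by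
      rw [Nat.choose_succ_succ]; push_cast; ring
    have e1 : n + 1 - (k+1) = (n - (k+1)) + 1 := by omega
    have e2 : n - k = (n - (k+1)) + 1 := by omega
    unfold W
    rw [hc, e1, e2, pow_succ]
    ring
  rw [h1, Finset.sum_add_distrib]
  have h2 : W (n+1) (n+1) p * g (n+1) = p * (W n n p * g (n+1)) := by
    unfold W; simp [Nat.choose_self]; ring
  have h3 : W (n+1) 0 p * g 0 = (1-p) * (W n 0 p * g 0) := by
    unfold W; simp [pow_succ]; ring
  rw [h2, h3]
  ring

lemma Bern_mono_g {n : ℕ} {p : ℝ} (h0 : 0 ≤ p) (h1 : p ≤ 1) {g g' : ℕ → ℝ}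
    (hg : ∀ k, g k ≤ g' k) : Bern n p g ≤ Bern n p g' := by
  apply Finset.sum_le_sum
  intro k _
  exact mul_le_mul_of_nonneg_left (hg k) (W_nonneg h0 h1 n k)

lemma Bern_nonneg {n : ℕ} {p : ℝ} (h0 : 0 ≤ p) (h1 : p ≤ 1) {g : ℕ → ℝ}
    (hg : ∀ k, 0 ≤ g k) : 0 ≤ Bern n p g := by
  apply Finset.sum_nonneg
  intro k _
  exact mul_nonneg (W_nonneg h0 h1 n k) (hg k)

lemma Bern_const (n : ℕ) (p : ℝ) (c : ℝ) : Bern n p (fun _ => c) = c := by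
  unfold Bern
  rw [← Finset.sum_mul, sum_W, one_mul]

lemma Bern_anti_p {n : ℕ} {p p' : ℝ} (h0 : 0 ≤ p) (hpp : p ≤ p') (h1 : p' ≤ 1)
    {g : ℕ → ℝ} (hg : ∀ k, g (k + 1) ≤ g k) : Bern n p' g ≤ Bern n p g := by
  induction n generalizing g with
  | zero => unfold Bern W; simp
  | succ n ih =>
    rw [Bern_succ, Bern_succ]
    have hp0' : 0 ≤ p' := le_trans h0 hpp
    have hp1 : p ≤ 1 := le_trans hpp h1
    have hA : Bern n p' g ≤ Bern n p g := ih hg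
    have hB : Bern n p' (fun k => g (k+1)) ≤ Bern n p (fun k => g (k+1)) :=
      ih (fun k => hg (k+1))
    have hC : Bern n p (fun k => g (k+1)) ≤ Bern n p g :=
      Bern_mono_g h0 hp1 (fun k => hg k)
    nlinarith [hA, hB, hC]

/-! ### Multivariate expectations -/

noncomputable def multiE {ι : Type} [Fintype ι] [DecidableEq ι] (m : ι → ℕ) (x : ι → ℝ)
    (g : ℕ → ℝ) : ℝ :=
  ∑ k : (∀ t, Fin (m t + 1)), (∏ t, W (m t) ((k t : ℕ)) (x t)) * g (∑ t, ((k t : ℕ)))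

variable {ι : Type} [Fintype ι] [DecidableEq ι]

lemma prodW_nonneg (m : ι → ℕ) {x : ι → ℝ} (hx : ∀ t, 0 ≤ x t ∧ x t ≤ 1)
    (k : ∀ t, Fin (m t + 1)) : 0 ≤ ∏ t, W (m t) ((k t : ℕ)) (x t) :=
  Finset.prod_nonneg fun t _ => W_nonneg (hx t).1 (hx t).2 _ _

lemma multiE_mono_g (m : ι → ℕ) {x : ι → ℝ} (hx : ∀ t, 0 ≤ x t ∧ x t ≤ 1) {g g' : ℕ → ℝ}
    (hg : ∀ s, g s ≤ g' s) : multiE m x g ≤ multiE m x g' := by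
  apply Finset.sum_le_sum
  intro k _
  exact mul_le_mul_of_nonneg_left (hg _) (prodW_nonneg m hx k)

lemma multiE_nonneg (m : ι → ℕ) {x : ι → ℝ} (hx : ∀ t, 0 ≤ x t ∧ x t ≤ 1) {g : ℕ → ℝ}
    (hg : ∀ s, 0 ≤ g s) : 0 ≤ multiE m x g :=
  Finset.sum_nonneg fun k _ => mul_nonneg (prodW_nonneg m hx k) (hg _)

lemma multiE_const (m : ι → ℕ) {x : ι → ℝ} (hx : ∀ t, 0 ≤ x t ∧ x t ≤ 1) (c : ℝ) :
    multiE m x (fun _ => c) = c := by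
  unfold multiE
  rw [← Finset.sum_mul]
  have : ∑ k : (∀ t, Fin (m t + 1)), ∏ t, W (m t) ((k t : ℕ)) (x t) = 1 := by
    rw [← Fintype.piFinset_univ]
    have h2 : (∏ t : ι, ∑ a : Fin (m t + 1), W (m t) ((a : ℕ)) (x t))
        = ∑ k ∈ Fintype.piFinset (fun t => (univ : Finset (Fin (m t + 1)))),
            ∏ t, W (m t) ((k t : ℕ)) (x t) :=
      Finset.prod_univ_sum _ _
    rw [← h2]
    have h3 : ∀ t : ι, ∑ a : Fin (m t + 1), W (m t) (a : ℕ) (x t) = 1 := by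
      intro t
      rw [Fin.sum_univ_eq_sum_range (fun a => W (m t) a (x t)) (m t + 1)]
      exact sum_W (m t) (x t)
    rw [Finset.prod_congr rfl (fun t _ => h3 t), Finset.prod_const_one]
  rw [this, one_mul]

lemma multiE_le_const (m : ι → ℕ) {x : ι → ℝ} (hx : ∀ t, 0 ≤ x t ∧ x t ≤ 1) {g : ℕ → ℝ}
    {c : ℝ} (hg : ∀ s, g s ≤ c) : multiE m x g ≤ c := by
  calc multiE m x g ≤ multiE m x (fun _ => c) := multiE_mono_g m hx hg
    _ = c := multiE_const m hx c

lemma piSplitAt_symm_self {β : ι → Type} (t0 : ι) (p : β t0 × ∀ j : {j // j ≠ t0}, β j) :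
    (Equiv.piSplitAt t0 β).symm p t0 = p.1 := by simp [Equiv.piSplitAt]

lemma piSplitAt_symm_ne {β : ι → Type} (t0 : ι) (j : ι) (h : j ≠ t0)
    (p : β t0 × ∀ j : {j // j ≠ t0}, β j) :
    (Equiv.piSplitAt t0 β).symm p j = p.2 ⟨j, h⟩ := by simp [Equiv.piSplitAt, dif_neg h]

lemma multiE_peel (m : ι → ℕ) (x : ι → ℝ) (g : ℕ → ℝ) (t0 : ι) :
    multiE m x g = Bern (m t0) (x t0)
      (fun a => multiE (fun t : {t // t ≠ t0} => m t) (fun t : {t // t ≠ t0} => x t)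
        (fun s => g (a + s))) := by
  unfold multiE Bern
  rw [← Equiv.sum_comp (Equiv.piSplitAt t0 (fun t => Fin (m t + 1))).symm
    (fun k => (∏ t, W (m t) ((k t : ℕ)) (x t)) * g (∑ t, ((k t : ℕ)))),
    Fintype.sum_prod_type,
    ← Fin.sum_univ_eq_sum_range (fun a => W (m t0) a (x t0) * _) (m t0 + 1)]
  apply Finset.sum_congr rfl
  intro a _
  rw [Finset.mul_sum]
  apply Finset.sum_congr rfl
  intro k' _
  set k := (Equiv.piSplitAt t0 (fun t => Fin (m t + 1))).symm (a, k') with hk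
  have hk0 : k t0 = a := piSplitAt_symm_self (β := fun t => Fin (m t + 1)) t0 (a, k')
  have hkne : ∀ (t : ι) (h : t ≠ t0), k t = k' ⟨t, h⟩ := fun t h => piSplitAt_symm_ne (β := fun t => Fin (m t + 1)) t0 t h (a, k')
  have hprod : ∏ t, W (m t) ((k t : ℕ)) (x t)
      = W (m t0) (a : ℕ) (x t0) * ∏ t : {t // t ≠ t0}, W (m t) ((k' t : ℕ)) (x t) := by
    rw [← Finset.mul_prod_erase univ _ (Finset.mem_univ t0), hk0]
    congr 1
    calc ∏ t ∈ Finset.univ.erase t0, W (m t) ((k t : ℕ)) (x t)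
        = ∏ t : {t // t ≠ t0}, W (m t.1) ((k t.1 : ℕ)) (x t.1) :=
          Finset.prod_subtype (p := fun t => t ≠ t0) _ (by simp) _
      _ = ∏ t : {t // t ≠ t0}, W (m t.1) ((k' t : ℕ)) (x t.1) :=
          Finset.prod_congr rfl (fun t _ => by rw [hkne t.1 t.2])
  have hsum : ∑ t, ((k t : ℕ)) = (a : ℕ) + ∑ t : {t // t ≠ t0}, ((k' t : ℕ)) := by
    rw [← Finset.add_sum_erase univ _ (Finset.mem_univ t0), hk0]
    congr 1
    calc ∑ t ∈ Finset.univ.erase t0, ((k t : ℕ))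
        = ∑ t : {t // t ≠ t0}, ((k t.1 : ℕ)) :=
          Finset.sum_subtype (p := fun t => t ≠ t0) _ (by simp) _
      _ = ∑ t : {t // t ≠ t0}, ((k' t : ℕ)) :=
          Finset.sum_congr rfl (fun t _ => by rw [hkne t.1 t.2])
  rw [hprod, hsum]
  ring

seal multiE in
set_option maxHeartbeats 1000000 in
lemma multiE_anti_single (m : ι → ℕ) {x : ι → ℝ} (hx : ∀ t, 0 ≤ x t ∧ x t ≤ 1) (t0 : ι)
    {p p' : ℝ} (h0 : 0 ≤ p) (hpp : p ≤ p') (h1 : p' ≤ 1) {g : ℕ → ℝ}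
    (hg : ∀ s, g (s + 1) ≤ g s) :
    multiE m (Function.update x t0 p') g ≤ multiE m (Function.update x t0 p) g := by
  rw [multiE_peel m (Function.update x t0 p') g t0, multiE_peel m (Function.update x t0 p) g t0]
  have hres : ∀ t : {t // t ≠ t0}, Function.update x t0 p' t.1 = x t.1 ∧
      Function.update x t0 p t.1 = x t.1 := fun t =>
    ⟨Function.update_of_ne t.2 _ x, Function.update_of_ne t.2 _ x⟩
  have hsame : ∀ (c : ℝ), (fun t : {t // t ≠ t0} => Function.update x t0 c t.1)
      = fun t : {t // t ≠ t0} => x t.1 := fun c => funext fun t => Function.update_of_ne t.2 _ x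
  rw [Function.update_self, Function.update_self, hsame p, hsame p']
  apply Bern_anti_p h0 hpp h1
  intro a
  apply multiE_mono_g (x := fun t : {t // t ≠ t0} => x t.1) _ (fun t => hx t.1)
  intro s
  have : a + 1 + s = (a + s) + 1 := by omega
  rw [this]
  exact hg (a + s)

lemma multiE_anti (m : ι → ℕ) {x x' : ι → ℝ} (hx0 : ∀ t, 0 ≤ x t) (hx1 : ∀ t, x' t ≤ 1)
    (hxx : ∀ t, x t ≤ x' t) {g : ℕ → ℝ} (hg : ∀ s, g (s + 1) ≤ g s) :
    multiE m x' g ≤ multiE m x g := by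
  have key : ∀ s : Finset ι, multiE m (fun t => if t ∈ s then x' t else x t) g ≤ multiE m x g := by
    intro s
    induction s using Finset.induction with
    | empty => simp
    | @insert a s ha ih =>
      set y : ι → ℝ := fun t => if t ∈ s then x' t else x t with hy
      have hyb : ∀ t, 0 ≤ y t ∧ y t ≤ 1 := by
        intro t
        simp only [hy]
        split
        · exact ⟨le_trans (hx0 t) (hxx t), hx1 t⟩
        · exact ⟨hx0 t, le_trans (hxx t) (hx1 t)⟩
      have h1 : (fun t => if t ∈ insert a s then x' t else x t) = Function.update y a (x' a) := by
        funext t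
        by_cases hta : t = a
        · subst hta; simp [Function.update_self]
        · simp [Function.update_of_ne hta, hy, Finset.mem_insert, hta]
      have h2 : y = Function.update y a (x a) := by
        have : y a = x a := by simp [hy, ha]
        rw [← this, Function.update_eq_self]
      calc multiE m (fun t => if t ∈ insert a s then x' t else x t) g
          = multiE m (Function.update y a (x' a)) g := by rw [h1]
        _ ≤ multiE m (Function.update y a (x a)) g :=
            multiE_anti_single m hyb a (hx0 a) (hxx a) (hx1 a) hg
        _ = multiE m y g := by rw [← h2]
        _ ≤ multiE m x g := ih
  have := key Finset.univ
  simpa using this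



/-! ### zeta lemmas -/

variable {q : ℕ}

lemma zeta_factor_bounds (hq1 : 1 < (q : ℝ)) {i m : ℕ} (h : i < m) :
    0 ≤ 1 - (q : ℝ) ^ ((i : ℤ) - (m : ℤ)) ∧ 1 - (q : ℝ) ^ ((i : ℤ) - (m : ℤ)) ≤ 1 := by
  have hq0 : (0 : ℝ) < q := lt_trans one_pos hq1
  have hlt : (q : ℝ) ^ ((i : ℤ) - (m : ℤ)) < (q : ℝ) ^ (0 : ℤ) :=
    zpow_lt_zpow_right₀ hq1 (by omega)
  have hpos : (0 : ℝ) < (q : ℝ) ^ ((i : ℤ) - (m : ℤ)) := zpow_pos hq0 _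
  rw [zpow_zero] at hlt
  constructor <;> linarith

lemma zeta_nonneg (hq1 : 1 < (q : ℝ)) {a m : ℕ} (h : a ≤ m) : 0 ≤ zeta q a m :=
  Finset.prod_nonneg fun i hi =>
    (zeta_factor_bounds hq1 (by have := Finset.mem_range.mp hi; omega)).1

lemma zeta_le_one (hq1 : 1 < (q : ℝ)) {a m : ℕ} (h : a ≤ m) : zeta q a m ≤ 1 :=
  Finset.prod_le_one
    (fun i hi => (zeta_factor_bounds hq1 (by have := Finset.mem_range.mp hi; omega)).1)
    (fun i hi => (zeta_factor_bounds hq1 (by have := Finset.mem_range.mp hi; omega)).2)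

lemma zeta_anti_a (hq1 : 1 < (q : ℝ)) {a m : ℕ} (h : a + 1 ≤ m) :
    zeta q (a + 1) m ≤ zeta q a m := by
  unfold zeta
  rw [Finset.prod_range_succ]
  have h1 := zeta_factor_bounds hq1 (show a < m by omega)
  have h2 : 0 ≤ ∏ i ∈ Finset.range a, (1 - (q : ℝ) ^ ((i : ℤ) - (m : ℤ))) :=
    zeta_nonneg hq1 (by omega)
  calc (∏ i ∈ Finset.range a, (1 - (q : ℝ) ^ ((i : ℤ) - (m : ℤ))))
        * (1 - (q : ℝ) ^ ((a : ℤ) - (m : ℤ)))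
      ≤ (∏ i ∈ Finset.range a, (1 - (q : ℝ) ^ ((i : ℤ) - (m : ℤ)))) * 1 := by
        apply mul_le_mul_of_nonneg_left h1.2 h2
    _ = _ := by rw [mul_one]

lemma zeta_mono_m (hq1 : 1 < (q : ℝ)) {a m : ℕ} (h : a ≤ m) :
    zeta q a m ≤ zeta q a (m + 1) := by
  apply Finset.prod_le_prod
  · intro i hi
    exact (zeta_factor_bounds hq1 (by have := Finset.mem_range.mp hi; omega)).1
  · intro i hi
    have hle : (q : ℝ) ^ ((i : ℤ) - ((m + 1 : ℕ) : ℤ)) ≤ (q : ℝ) ^ ((i : ℤ) - (m : ℤ)) :=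
      zpow_le_zpow_right₀ (le_of_lt hq1) (by push_cast; omega)
    linarith

/-! ### the step function φ -/

noncomputable def phi (q r : ℕ) (s : ℕ) : ℝ := if s + 1 ≤ r then zeta q (s + 1) r else 0

lemma phi_nonneg (hq1 : 1 < (q : ℝ)) (r s : ℕ) : 0 ≤ phi q r s := by
  unfold phi; split
  · exact zeta_nonneg hq1 (by omega)
  · exact le_refl 0

lemma phi_le_one (hq1 : 1 < (q : ℝ)) (r s : ℕ) : phi q r s ≤ 1 := by
  unfold phi; split
  · exact zeta_le_one hq1 (by omega)
  · norm_num

lemma phi_step (hq1 : 1 < (q : ℝ)) (r s : ℕ) : phi q r (s + 1) ≤ phi q r s := by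
  unfold phi
  by_cases h : s + 1 + 1 ≤ r
  · rw [if_pos h, if_pos (by omega)]
    exact zeta_anti_a hq1 (by omega)
  · rw [if_neg h]
    split
    · exact zeta_nonneg hq1 (by omega)
    · norm_num

lemma phi_mono_r (hq1 : 1 < (q : ℝ)) (r s : ℕ) : phi q r s ≤ phi q (r + 1) s := by
  unfold phi
  by_cases h : s + 1 ≤ r
  · rw [if_pos h, if_pos (by omega)]
    exact zeta_mono_m hq1 h
  · rw [if_neg h]
    split
    · exact zeta_nonneg hq1 (by omega)
    · norm_num

lemma phi_zero (q s : ℕ) : phi q 0 s = 0 := by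
  unfold phi; rw [if_neg (by omega)]

/-! ### Abel summation -/

lemma telescope (g : ℕ → ℝ) (hg0 : g 0 = 0) (N : ℕ) :
    ∑ k ∈ Finset.Icc 1 N, (g k - g (k - 1)) = g N := by
  induction N with
  | zero => simp [hg0]
  | succ N ih =>
    rw [Finset.sum_Icc_succ_top (by omega), ih]
    simp

lemma abel_identity (M : ℕ) (u g : ℕ → ℝ) (hg0 : g 0 = 0) :
    ∑ r ∈ Finset.Icc 1 M, u r * g r
      = ∑ k ∈ Finset.Icc 1 M, (g k - g (k - 1)) * ∑ i ∈ Finset.Icc k M, u i := by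
  induction M with
  | zero => simp
  | succ M ih =>
    rw [Finset.sum_Icc_succ_top (show 1 ≤ M + 1 by omega), ih]
    rw [Finset.sum_Icc_succ_top (show 1 ≤ M + 1 by omega)]
    have hT : ∀ k ∈ Finset.Icc 1 M, (g k - g (k - 1)) * ∑ i ∈ Finset.Icc k (M + 1), u i
        = (g k - g (k - 1)) * ∑ i ∈ Finset.Icc k M, u i + (g k - g (k - 1)) * u (M + 1) := by
      intro k hk
      have hkM : k ≤ M + 1 := by have := (Finset.mem_Icc.mp hk).2; omega
      rw [Finset.sum_Icc_succ_top hkM]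
      ring
    rw [Finset.sum_congr rfl hT, Finset.sum_add_distrib, ← Finset.sum_mul]
    have htel : (∑ k ∈ Finset.Icc 1 M, (g k - g (k - 1))) = g M := telescope g hg0 M
    rw [htel]
    have : ∑ i ∈ Finset.Icc (M + 1) (M + 1), u i = u (M + 1) := by simp
    rw [this]
    have hgM : g (M + 1 - 1) = g M := by norm_num
    rw [hgM]
    ring

lemma abel_mono (M : ℕ) (u u' g : ℕ → ℝ) (hg0 : g 0 = 0)
    (hg1 : 0 ≤ g 1) (hmono : ∀ r, 1 ≤ r → r < M → g r ≤ g (r + 1))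
    (hdom : ∀ k, 1 ≤ k → k ≤ M → ∑ i ∈ Finset.Icc k M, u' i ≤ ∑ i ∈ Finset.Icc k M, u i) :
    ∑ r ∈ Finset.Icc 1 M, u' r * g r ≤ ∑ r ∈ Finset.Icc 1 M, u r * g r := by
  rw [abel_identity M u g hg0, abel_identity M u' g hg0]
  apply Finset.sum_le_sum
  intro k hk
  obtain ⟨hk1, hkM⟩ := Finset.mem_Icc.mp hk
  have hdelta : 0 ≤ g k - g (k - 1) := by
    rcases Nat.eq_or_lt_of_le hk1 with h1 | h1
    · rw [← h1]; simpa [hg0] using hg1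
    · have : g (k - 1) ≤ g (k - 1 + 1) := hmono (k - 1) (by omega) (by omega)
      have hkk : k - 1 + 1 = k := by omega
      rw [hkk] at this
      linarith
  exact mul_le_mul_of_nonneg_left (hdom k hk1 hkM) hdelta

/-! ### Omega as a multivariate expectation -/

lemma multiE_group {ι : Type} [Fintype ι] [DecidableEq ι] (m : ι → ℕ) (x : ι → ℝ)
    (g : ℕ → ℝ) :
    multiE m x g = ∑ s ∈ Finset.range ((∑ t, m t) + 1),
      (∑ k : (∀ t, Fin (m t + 1)),
        if (∑ t, ((k t : ℕ))) = s then ∏ t, W (m t) ((k t : ℕ)) (x t) else 0) * g s := by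
  unfold multiE
  have hmem : ∀ k : (∀ t, Fin (m t + 1)), (∑ t, ((k t : ℕ))) ∈ Finset.range ((∑ t, m t) + 1) := by
    intro k
    rw [Finset.mem_range, Nat.lt_succ_iff]
    exact Finset.sum_le_sum fun t _ => Nat.lt_succ_iff.mp (k t).isLt
  calc ∑ k : (∀ t, Fin (m t + 1)), (∏ t, W (m t) ((k t : ℕ)) (x t)) * g (∑ t, ((k t : ℕ)))
      = ∑ k : (∀ t, Fin (m t + 1)), ∑ s ∈ Finset.range ((∑ t, m t) + 1),
          (if (∑ t, ((k t : ℕ))) = s then (∏ t, W (m t) ((k t : ℕ)) (x t)) * g s else 0) := by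
        apply Finset.sum_congr rfl
        intro k _
        rw [Finset.sum_ite_eq, if_pos (hmem k)]
    _ = ∑ s ∈ Finset.range ((∑ t, m t) + 1), ∑ k : (∀ t, Fin (m t + 1)),
          (if (∑ t, ((k t : ℕ))) = s then (∏ t, W (m t) ((k t : ℕ)) (x t)) * g s else 0) :=
        Finset.sum_comm
    _ = _ := by
        apply Finset.sum_congr rfl
        intro s _
        rw [Finset.sum_mul]
        apply Finset.sum_congr rfl
        intro k _
        rw [ite_mul, zero_mul]

lemma omega_eq {nv : ℕ} (b : Fin nv → ℕ) (j : Fin nv) (s : ℕ) (x : Fin nv → ℝ) :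
    OmegaBCN b j s x = ∑ k : (∀ t, Fin ((if t = j then b t - 1 else b t) + 1)),
      if (∑ t, ((k t : ℕ))) = s then
        ∏ t, W (if t = j then b t - 1 else b t) ((k t : ℕ)) (x t) else 0 := rfl

lemma omega_nonneg {nv : ℕ} (b : Fin nv → ℕ) (j : Fin nv) (s : ℕ) {x : Fin nv → ℝ}
    (hx : ∀ t, 0 ≤ x t ∧ x t ≤ 1) : 0 ≤ OmegaBCN b j s x := by
  rw [omega_eq]
  apply Finset.sum_nonneg
  intro k _
  split
  · exact Finset.prod_nonneg fun t _ => W_nonneg (hx t).1 (hx t).2 _ _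
  · exact le_refl 0

lemma sum_mrow {nv : ℕ} (b : Fin nv → ℕ) (j : Fin nv) (hbj : 0 < b j) :
    (∑ t, (if t = j then b t - 1 else b t)) = (∑ j', b j') - 1 := by
  have e1 : ∑ t, (if t = j then b t - 1 else b t)
      = (b j - 1) + ∑ t ∈ Finset.univ.erase j, (if t = j then b t - 1 else b t) := by
    rw [← Finset.add_sum_erase Finset.univ _ (Finset.mem_univ j), if_pos rfl]
  have e2 : ∑ t ∈ Finset.univ.erase j, (if t = j then b t - 1 else b t)
      = ∑ t ∈ Finset.univ.erase j, b t := by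
    apply Finset.sum_congr rfl
    intro t ht
    rw [if_neg (Finset.mem_erase.mp ht).1]
  have e3 : ∑ j', b j' = b j + ∑ t ∈ Finset.univ.erase j, b t :=
    (Finset.add_sum_erase Finset.univ b (Finset.mem_univ j)).symm
  omega

lemma inner_eq {q nv : ℕ} (hq1 : 1 < (q : ℝ)) (b : Fin nv → ℕ) (j : Fin nv) (x : Fin nv → ℝ)
    {r : ℕ} (hr : 1 ≤ r) (hbj : 0 < b j) :
    ∑ s ∈ Finset.range (min ((∑ j', b j') - 1) (r - 1) + 1),
        OmegaBCN b j s x * zeta q (s + 1) r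
      = multiE (fun t => if t = j then b t - 1 else b t) x (phi q r) := by
  rw [multiE_group]
  have hconv : ∀ s ∈ Finset.range ((∑ t, (if t = j then b t - 1 else b t)) + 1),
      (∑ k : (∀ t, Fin ((if t = j then b t - 1 else b t) + 1)),
        if (∑ t, ((k t : ℕ))) = s then
          ∏ t, W (if t = j then b t - 1 else b t) ((k t : ℕ)) (x t) else 0) * phi q r s
      = OmegaBCN b j s x * phi q r s := by
    intro s _
    rw [omega_eq]
  rw [Finset.sum_congr rfl hconv, sum_mrow b j hbj]
  set D := (∑ j', b j') - 1 with hD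
  have hsub : Finset.range (min D (r - 1) + 1) ⊆ Finset.range (D + 1) := by
    apply Finset.range_subset_range.mpr; omega
  rw [← Finset.sum_subset hsub]
  · apply Finset.sum_congr rfl
    intro s hs
    have hsle : s ≤ min D (r - 1) := by
      have := Finset.mem_range.mp hs; omega
    unfold phi
    rw [if_pos (by omega)]
  · intro s hs hns
    have h1 : s ≤ D := by have := Finset.mem_range.mp hs; omega
    have h2 : min D (r - 1) < s := by
      by_contra hcon
      exact hns (Finset.mem_range.mpr (by omega))
    have : ¬ (s + 1 ≤ r) := by omega
    unfold phi
    rw [if_neg this, mul_zero]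

/-! ### The batch check-node functional -/

noncomputable def batchA (q M : ℕ) {nv : ℕ} (u : ℕ → ℝ) (b : Fin nv → ℕ) (j : Fin nv)
    (x : Fin nv → ℝ) : ℝ :=
  ∑ r ∈ Finset.Icc 1 M, u r *
    ∑ s ∈ Finset.range (min ((∑ j', b j') - 1) (r - 1) + 1),
      OmegaBCN b j s x * zeta q (s + 1) r

lemma batchA_eq {q M nv : ℕ} (hq1 : 1 < (q : ℝ)) (u : ℕ → ℝ) {b : Fin nv → ℕ} {j : Fin nv}
    (x : Fin nv → ℝ) (hbj : 0 < b j) :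
    batchA q M u b j x = ∑ r ∈ Finset.Icc 1 M,
      u r * multiE (fun t => if t = j then b t - 1 else b t) x (phi q r) := by
  apply Finset.sum_congr rfl
  intro r hr
  rw [inner_eq hq1 b j x (Finset.mem_Icc.mp hr).1 hbj]

lemma batchA_bounds {q M nv : ℕ} (hq1 : 1 < (q : ℝ)) {u : ℕ → ℝ} {b : Fin nv → ℕ} {j : Fin nv}
    {x : Fin nv → ℝ} (hx : ∀ t, 0 ≤ x t ∧ x t ≤ 1) (hbj : 0 < b j)
    (hu : ∀ r, r ≤ M → 0 ≤ u r) (husum : ∑ r ∈ Finset.range (M + 1), u r = 1) :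
    0 ≤ batchA q M u b j x ∧ batchA q M u b j x ≤ 1 := by
  rw [batchA_eq hq1 u x hbj]
  constructor
  · apply Finset.sum_nonneg
    intro r hr
    apply mul_nonneg (hu r (Finset.mem_Icc.mp hr).2)
    exact multiE_nonneg _ hx (phi_nonneg hq1 r)
  · calc ∑ r ∈ Finset.Icc 1 M, u r * multiE (fun t => if t = j then b t - 1 else b t) x (phi q r)
        ≤ ∑ r ∈ Finset.Icc 1 M, u r := by
          apply Finset.sum_le_sum
          intro r hr
          have h1 : multiE (fun t => if t = j then b t - 1 else b t) x (phi q r) ≤ 1 :=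
            multiE_le_const _ hx (phi_le_one hq1 r)
          have h2 : 0 ≤ u r := hu r (Finset.mem_Icc.mp hr).2
          nlinarith
      _ ≤ ∑ r ∈ Finset.range (M + 1), u r := by
          apply Finset.sum_le_sum_of_subset_of_nonneg
          · intro r hr
            rw [Finset.mem_range]
            have := (Finset.mem_Icc.mp hr).2; omega
          · intro r hr _
            exact hu r (by have := Finset.mem_range.mp hr; omega)
      _ = 1 := husum

lemma batchA_mono {q M nv : ℕ} (hq1 : 1 < (q : ℝ)) {u u' : ℕ → ℝ} {b : Fin nv → ℕ} {j : Fin nv}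
    {x x' : Fin nv → ℝ} (hbj : 0 < b j)
    (hx0 : ∀ t, 0 ≤ x t) (hx1 : ∀ t, x' t ≤ 1) (hxx : ∀ t, x t ≤ x' t)
    (hu : ∀ r, r ≤ M → 0 ≤ u r)
    (hdom : ∀ k, k ≤ M → ∑ i ∈ Finset.Icc k M, u' i ≤ ∑ i ∈ Finset.Icc k M, u i) :
    batchA q M u' b j x' ≤ batchA q M u b j x := by
  have hx'b : ∀ t, 0 ≤ x' t ∧ x' t ≤ 1 := fun t => ⟨le_trans (hx0 t) (hxx t), hx1 t⟩
  have hxb : ∀ t, 0 ≤ x t ∧ x t ≤ 1 := fun t => ⟨hx0 t, le_trans (hxx t) (hx1 t)⟩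
  rw [batchA_eq hq1 u x hbj, batchA_eq hq1 u' x' hbj]
  set m := fun t => if t = j then b t - 1 else b t with hm
  calc ∑ r ∈ Finset.Icc 1 M, u' r * multiE m x' (phi q r)
      ≤ ∑ r ∈ Finset.Icc 1 M, u r * multiE m x' (phi q r) := by
        apply abel_mono M u u' (fun r => multiE m x' (phi q r))
        · have : phi q 0 = fun _ => (0 : ℝ) := funext (phi_zero q)
          rw [this]
          have := multiE_const m hx'b (0 : ℝ)
          simpa using this
        · exact multiE_nonneg _ hx'b (phi_nonneg hq1 1)
        · intro r hr1 hrM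
          exact multiE_mono_g _ hx'b (phi_mono_r hq1 r)
        · intro k hk1 hkM
          exact hdom k hkM
    _ ≤ ∑ r ∈ Finset.Icc 1 M, u r * multiE m x (phi q r) := by
        apply Finset.sum_le_sum
        intro r hr
        apply mul_le_mul_of_nonneg_left _ (hu r (Finset.mem_Icc.mp hr).2)
        exact multiE_anti m hx0 hx1 hxx (phi_step hq1 r)

/-! ### Bounds on the density-evolution sequences -/

lemma pow_unit {y : ℝ} (h0 : 0 ≤ y) (h1 : y ≤ 1) (n : ℕ) : 0 ≤ y ^ n ∧ y ^ n ≤ 1 :=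
  ⟨pow_nonneg h0 n, pow_le_one₀ h0 h1⟩

lemma prod_unit {α : Type*} (s : Finset α) (f : α → ℝ) (h : ∀ t ∈ s, 0 ≤ f t ∧ f t ≤ 1) :
    0 ≤ ∏ t ∈ s, f t ∧ ∏ t ∈ s, f t ≤ 1 :=
  ⟨Finset.prod_nonneg fun t ht => (h t ht).1,
   Finset.prod_le_one (fun t ht => (h t ht).1) (fun t ht => (h t ht).2)⟩

lemma sys_bounds {q M nc nv nc1 : ℕ} (hq1 : 1 < (q : ℝ)) {b : Fin nc → Fin nv → ℕ}
    {h : ℕ → ℝ} {X Y : ℕ → Fin nc → Fin nv → ℝ} {Z : ℕ → Fin nv → ℝ}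
    (hpos : ∀ r, r ≤ M → 0 ≤ h r) (hsum : ∑ r ∈ Finset.range (M + 1), h r = 1)
    (hsys : DESystem q M nc1 b h X Y Z) :
    (∀ ℓ i j, 0 ≤ X ℓ i j ∧ X ℓ i j ≤ 1) ∧ (∀ ℓ i j, 0 ≤ Y (ℓ + 1) i j ∧ Y (ℓ + 1) i j ≤ 1) := by
  obtain ⟨hX0, habs, hldpc, hbatch, hvar, hZ⟩ := hsys
  have hbatchA : ∀ ℓ (i : Fin nc) (j : Fin nv), 0 < b i j → nc1 ≤ (i : ℕ) →
      Y (ℓ + 1) i j = 1 - batchA q M h (b i) j (X ℓ i) := fun ℓ i j h1 h2 => hbatch ℓ i j h1 h2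
  have hYstep : ∀ ℓ, (∀ i j, 0 ≤ X ℓ i j ∧ X ℓ i j ≤ 1) →
      ∀ i j, 0 ≤ Y (ℓ + 1) i j ∧ Y (ℓ + 1) i j ≤ 1 := by
    intro ℓ hXb i j
    by_cases hb : b i j = 0
    · rw [(habs (ℓ + 1) i j hb).2]; norm_num
    · have hbpos : 0 < b i j := Nat.pos_of_ne_zero hb
      rcases lt_or_ge (i : ℕ) nc1 with hi | hi
      · rw [hldpc ℓ i j hbpos hi]
        have h1 : 0 ≤ ∏ j' ∈ Finset.univ.erase j, (1 - X ℓ i j') ^ b i j' ∧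
            (∏ j' ∈ Finset.univ.erase j, (1 - X ℓ i j') ^ b i j') ≤ 1 := by
          apply prod_unit
          intro t _
          exact pow_unit (by linarith [(hXb i t).2]) (by linarith [(hXb i t).1]) _
        have h2 : 0 ≤ (1 - X ℓ i j) ^ (b i j - 1) ∧ (1 - X ℓ i j) ^ (b i j - 1) ≤ 1 :=
          pow_unit (by linarith [(hXb i j).2]) (by linarith [(hXb i j).1]) _
        constructor <;> nlinarith [h1.1, h1.2, h2.1, h2.2]
      · rw [hbatchA ℓ i j hbpos hi]
        have := batchA_bounds (M := M) hq1 (fun t => hXb i t) hbpos hpos hsum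
        constructor <;> linarith [this.1, this.2]
  have hXb : ∀ ℓ i j, 0 ≤ X ℓ i j ∧ X ℓ i j ≤ 1 := by
    intro ℓ
    induction ℓ with
    | zero => intro i j; rw [hX0 i j]; norm_num
    | succ ℓ ih =>
      intro i j
      by_cases hb : b i j = 0
      · rw [(habs (ℓ + 1) i j hb).1]; norm_num
      · have hbpos : 0 < b i j := Nat.pos_of_ne_zero hb
        have hYb := hYstep ℓ ih
        rw [hvar ℓ i j hbpos]
        have h1 : 0 ≤ ∏ i' ∈ Finset.univ.erase i, Y (ℓ + 1) i' j ^ b i' j ∧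
            (∏ i' ∈ Finset.univ.erase i, Y (ℓ + 1) i' j ^ b i' j) ≤ 1 := by
          apply prod_unit
          intro t _
          exact pow_unit (hYb t j).1 (hYb t j).2 _
        have h2 : 0 ≤ Y (ℓ + 1) i j ^ (b i j - 1) ∧ Y (ℓ + 1) i j ^ (b i j - 1) ≤ 1 :=
          pow_unit (hYb i j).1 (hYb i j).2 _
        constructor <;> nlinarith [h1.1, h1.2, h2.1, h2.2]
  exact ⟨hXb, fun ℓ => hYstep ℓ (hXb ℓ)⟩

end DEProof

open DEProof

/-- **Monotonicity of density evolution with respect to the rank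
distribution.**  If `h′ ⪯ h` (pointwise dominated tails), then at every iteration
`ℓ ≥ 1` all erasure probabilities of the density evolution under `h` are bounded by those
under `h′`; consequently, if the a posteriori erasure probabilities vanish under `h′`,
they also vanish under `h`. -/
theorem DE_monotone_in_rank_distribution
    (q M nv nc1 nc2 : ℕ) (hq : IsPrimePow q) (hM : 1 ≤ M)
    (b : Fin (nc1 + nc2) → Fin nv → ℕ)
    (h h' : ℕ → ℝ)
    (hpos : ∀ r, r ≤ M → 0 ≤ h r) (hsum : ∑ r ∈ Finset.range (M + 1), h r = 1)
    (hpos' : ∀ r, r ≤ M → 0 ≤ h' r) (hsum' : ∑ r ∈ Finset.range (M + 1), h' r = 1)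
    (hdom : ∀ k, k ≤ M → ∑ i ∈ Finset.Icc k M, h' i ≤ ∑ i ∈ Finset.Icc k M, h i)
    (X Y : ℕ → Fin (nc1 + nc2) → Fin nv → ℝ) (Z : ℕ → Fin nv → ℝ)
    (X' Y' : ℕ → Fin (nc1 + nc2) → Fin nv → ℝ) (Z' : ℕ → Fin nv → ℝ)
    (hsys : DESystem q M nc1 b h X Y Z)
    (hsys' : DESystem q M nc1 b h' X' Y' Z') :
    (∀ ℓ, 1 ≤ ℓ → ∀ i j, X ℓ i j ≤ X' ℓ i j ∧ Y ℓ i j ≤ Y' ℓ i j) ∧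
    (∀ ℓ, 1 ≤ ℓ → ∀ j, Z ℓ j ≤ Z' ℓ j) ∧
    ((∀ j, Filter.Tendsto (fun ℓ => Z' ℓ j) Filter.atTop (nhds 0)) →
      ∀ j, Filter.Tendsto (fun ℓ => Z ℓ j) Filter.atTop (nhds 0)) := by
  have hq1 : 1 < (q : ℝ) := by
    have h2 : 2 ≤ q := hq.two_le
    have : (2 : ℝ) ≤ (q : ℝ) := by exact_mod_cast h2
    linarith
  obtain ⟨hXb, hYb⟩ := sys_bounds hq1 hpos hsum hsys
  obtain ⟨hXb', hYb'⟩ := sys_bounds hq1 hpos' hsum' hsys'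
  obtain ⟨hX0, habs, hldpc, hbatch, hvar, hZ⟩ := hsys
  obtain ⟨hX0', habs', hldpc', hbatch', hvar', hZ'⟩ := hsys'
  have hbatchA : ∀ ℓ (i : Fin (nc1 + nc2)) (j : Fin nv), 0 < b i j → nc1 ≤ (i : ℕ) →
      Y (ℓ + 1) i j = 1 - batchA q M h (b i) j (X ℓ i) := fun ℓ i j h1 h2 => hbatch ℓ i j h1 h2
  have hbatchA' : ∀ ℓ (i : Fin (nc1 + nc2)) (j : Fin nv), 0 < b i j → nc1 ≤ (i : ℕ) →
      Y' (ℓ + 1) i j = 1 - batchA q M h' (b i) j (X' ℓ i) := fun ℓ i j h1 h2 => hbatch' ℓ i j h1 h2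
  -- monotonicity steps
  have hYstep : ∀ ℓ, (∀ i j, X ℓ i j ≤ X' ℓ i j) →
      ∀ i j, Y (ℓ + 1) i j ≤ Y' (ℓ + 1) i j := by
    intro ℓ hXle i j
    by_cases hb : b i j = 0
    · rw [(habs (ℓ + 1) i j hb).2, (habs' (ℓ + 1) i j hb).2]
    · have hbpos : 0 < b i j := Nat.pos_of_ne_zero hb
      rcases lt_or_ge (i : ℕ) nc1 with hi | hi
      · rw [hldpc ℓ i j hbpos hi, hldpc' ℓ i j hbpos hi]
        apply sub_le_sub_left
        have hterm : ∀ t : Fin nv, (1 - X' ℓ i t) ^ b i t ≤ (1 - X ℓ i t) ^ b i t := by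
          intro t
          apply pow_le_pow_left₀ (by linarith [(hXb' ℓ i t).2]) (by linarith [hXle i t])
        have hprod : (∏ j' ∈ Finset.univ.erase j, (1 - X' ℓ i j') ^ b i j')
            ≤ ∏ j' ∈ Finset.univ.erase j, (1 - X ℓ i j') ^ b i j' := by
          apply Finset.prod_le_prod
          · intro t _
            exact pow_nonneg (by linarith [(hXb' ℓ i t).2]) _
          · intro t _
            exact hterm t
        have hpow : (1 - X' ℓ i j) ^ (b i j - 1) ≤ (1 - X ℓ i j) ^ (b i j - 1) :=
          pow_le_pow_left₀ (by linarith [(hXb' ℓ i j).2]) (by linarith [hXle i j]) _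
        apply mul_le_mul hprod hpow
          (pow_nonneg (by linarith [(hXb' ℓ i j).2]) _)
          (Finset.prod_nonneg fun t _ => pow_nonneg (by linarith [(hXb ℓ i t).2]) _)
      · rw [hbatchA ℓ i j hbpos hi, hbatchA' ℓ i j hbpos hi]
        apply sub_le_sub_left
        exact batchA_mono hq1 hbpos (fun t => (hXb ℓ i t).1) (fun t => (hXb' ℓ i t).2)
          (fun t => hXle i t) hpos hdom
  have hXstep : ∀ ℓ, (∀ i j, Y (ℓ + 1) i j ≤ Y' (ℓ + 1) i j) →
      ∀ i j, X (ℓ + 1) i j ≤ X' (ℓ + 1) i j := by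
    intro ℓ hYle i j
    by_cases hb : b i j = 0
    · rw [(habs (ℓ + 1) i j hb).1, (habs' (ℓ + 1) i j hb).1]
    · have hbpos : 0 < b i j := Nat.pos_of_ne_zero hb
      rw [hvar ℓ i j hbpos, hvar' ℓ i j hbpos]
      have hprod : (∏ i' ∈ Finset.univ.erase i, Y (ℓ + 1) i' j ^ b i' j)
          ≤ ∏ i' ∈ Finset.univ.erase i, Y' (ℓ + 1) i' j ^ b i' j := by
        apply Finset.prod_le_prod
        · intro t _
          exact pow_nonneg (hYb ℓ t j).1 _
        · intro t _
          exact pow_le_pow_left₀ (hYb ℓ t j).1 (hYle t j) _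
      have hpow : Y (ℓ + 1) i j ^ (b i j - 1) ≤ Y' (ℓ + 1) i j ^ (b i j - 1) :=
        pow_le_pow_left₀ (hYb ℓ i j).1 (hYle i j) _
      apply mul_le_mul hprod hpow (pow_nonneg (hYb ℓ i j).1 _)
        (Finset.prod_nonneg fun t _ => pow_nonneg (hYb' ℓ t j).1 _)
  have hXle : ∀ ℓ, ∀ i j, X ℓ i j ≤ X' ℓ i j := by
    intro ℓ
    induction ℓ with
    | zero => intro i j; rw [hX0 i j, hX0' i j]
    | succ ℓ ih => exact hXstep ℓ (hYstep ℓ ih)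
  have hYle : ∀ ℓ i j, Y (ℓ + 1) i j ≤ Y' (ℓ + 1) i j := fun ℓ => hYstep ℓ (hXle ℓ)
  have hZle : ∀ ℓ (j : Fin nv), Z (ℓ + 1) j ≤ Z' (ℓ + 1) j := by
    intro ℓ j
    rw [hZ ℓ j, hZ' ℓ j]
    apply Finset.prod_le_prod
    · intro t _
      exact pow_nonneg (hYb ℓ t j).1 _
    · intro t _
      exact pow_le_pow_left₀ (hYb ℓ t j).1 (hYle ℓ t j) _
  have hZnonneg : ∀ ℓ (j : Fin nv), 0 ≤ Z (ℓ + 1) j := by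
    intro ℓ j
    rw [hZ ℓ j]
    exact Finset.prod_nonneg fun t _ => pow_nonneg (hYb ℓ t j).1 _
  refine ⟨?_, ?_, ?_⟩
  · intro ℓ hℓ i j
    cases ℓ with
    | zero => omega
    | succ n => exact ⟨hXle (n + 1) i j, hYle n i j⟩
  · intro ℓ hℓ j
    cases ℓ with
    | zero => omega
    | succ n => exact hZle n j
  · intro H j
    apply tendsto_of_tendsto_of_tendsto_of_le_of_le' tendsto_const_nhds (H j)
    · filter_upwards [Filter.eventually_ge_atTop 1] with ℓ hℓ
      cases ℓ with
      | zero => omega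
      | succ n => exact hZnonneg n j
    · filter_upwards [Filter.eventually_ge_atTop 1] with ℓ hℓ
      cases ℓ with
      | zero => omega
      | succ n =>
        calc Z (n + 1) j ≤ Z' (n + 1) j := hZle n j
          _ ≤ Z' (n + 1) j := le_refl _
end

section
/- Let q be a prime power, M ≥ 1 and E ≥ 2 integers. For ε = (ε_1, …, ε_E) ∈ [0,1]^E, let E_1, …, E_E be independent random M×M diagonal matrices over F_q whose diagonal entries are i.i.d., equal to 1 with probability 1−ε_i and 0 with probability ε_i, and let T_2, …, T_E be independent uniformly random M×M matrices over F_q, independent of the E_i. Define H(ε) = E_1·T_2·E_2·T_3·E_3 ⋯ T_E·E_E. If ε, ε′ ∈ [0,1]^E satisfy ε_i ≤ ε′_i for all i, then for every integer t with 0 ≤ t ≤ M, Pr{ rank(H(ε′)) ≥ t } ≤ Pr{ rank(H(ε)) ≥ t }. -/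
/-- The `M × M` diagonal 0/1 matrix determined by an erasure pattern `d : Fin M → Bool`
(`d m = true` means the `m`-th packet survives). -/
def diagOf (F : Type) [Field F] {M : ℕ} (d : Fin M → Bool) : Matrix (Fin M) (Fin M) F :=
  Matrix.diagonal (fun m => if d m then 1 else 0)

/-- The line-network transfer matrix `H = E₁·T₂·E₂·T₃·E₃ ⋯ T_E·E_E`, where `d i` is the
erasure pattern of channel `i+1` and `T i` is the recoding matrix used before channel
`i+2`. -/
def lineH (F : Type) [Field F] {M E : ℕ} (hE : 1 ≤ E) (d : Fin E → Fin M → Bool)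
    (T : Fin (E - 1) → Matrix (Fin M) (Fin M) F) : Matrix (Fin M) (Fin M) F :=
  diagOf F (d ⟨0, hE⟩) *
    (List.ofFn (fun i : Fin (E - 1) =>
      T i * diagOf F (d ⟨i.val + 1, by have := i.isLt; omega⟩))).prod

/-- `Pr{rank(H(ε)) ≥ t}` for the line network: the erasure pattern of channel `i` is
i.i.d. Bernoulli (each packet survives with probability `1 − ε i`), the recoding matrices
are independent and uniformly distributed, and all are mutually independent. -/
noncomputable def linePrRankGe (F : Type) [Field F] [Fintype F] (M E : ℕ) (hE : 1 ≤ E)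
    (ε : Fin E → ℝ) (t : ℕ) : ℝ :=
  ∑ d : Fin E → Fin M → Bool, ∑ T : Fin (E - 1) → Matrix (Fin M) (Fin M) F,
    (∏ i, ∏ m, if d i m then 1 - ε i else ε i) *
      ((1 : ℝ) / (Fintype.card (Fin (E - 1) → Matrix (Fin M) (Fin M) F) : ℝ)) *
      (if t ≤ (lineH F hE d T).rank then 1 else 0)

namespace LineNetAux

variable {F : Type} [Field F] [Fintype F] {M : ℕ}

/-- Rank-`r` "identity-like" diagonal matrix. -/
def Dr (F : Type) [Field F] (M r : ℕ) : Matrix (Fin M) (Fin M) F :=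
  Matrix.diagonal (fun i => if (i : ℕ) < r then 1 else 0)

lemma Dr_mul_Dr {r r' : ℕ} (h : r ≤ r') : Dr F M r * Dr F M r' = Dr F M r := by
  unfold Dr
  rw [Matrix.diagonal_mul_diagonal]
  have hfun : (fun i : Fin M => (if (i : ℕ) < r then (1:F) else 0) * (if (i : ℕ) < r' then (1:F) else 0))
      = fun i : Fin M => if (i : ℕ) < r then (1:F) else 0 := by
    funext i
    by_cases hi : (i : ℕ) < r
    · have hi' : (i : ℕ) < r' := lt_of_lt_of_le hi h
      simp [hi, hi']
    · simp [hi]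
  rw [hfun]

lemma diagOf_mul_diagOf {d d' : Fin M → Bool} (h : ∀ m, d m = true → d' m = true) :
    diagOf F d' * diagOf F d = diagOf F d := by
  unfold diagOf
  rw [Matrix.diagonal_mul_diagonal]
  have hfun : (fun m : Fin M => (if d' m then (1:F) else 0) * (if d m then (1:F) else 0))
      = fun m : Fin M => if d m then (1:F) else 0 := by
    funext m
    by_cases hm : d m
    · simp [hm, h m hm]
    · simp [hm]
  rw [hfun]

lemma rank_Dr_le {r r' : ℕ} (h : r ≤ r') : (Dr F M r).rank ≤ (Dr F M r').rank := by
  conv_lhs => rw [← Dr_mul_Dr (F := F) (M := M) h]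
  exact Matrix.rank_mul_le_right _ _

lemma rank_Dr_of_le {r : ℕ} (h : r ≤ M) : (Dr F M r).rank = r := by
  classical
  unfold Dr
  rw [Matrix.rank_diagonal]
  have : { i : Fin M // (if (i : ℕ) < r then (1 : F) else 0) ≠ 0 } ≃ Fin r := by
    refine ⟨fun x => ⟨x.1.1, ?_⟩, fun y => ⟨⟨y.1, lt_of_lt_of_le y.2 h⟩, by simp [y.2]⟩,
      fun x => by ext; rfl, fun y => by ext; rfl⟩
    · by_contra hc
      exact x.2 (by simp [hc])
  rw [Fintype.card_congr this, Fintype.card_fin]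

/-- Smith-normal-form over a field: `A = U * Dr (rank A) * V` with `U`, `V` invertible. -/
lemma exists_snf (A : Matrix (Fin M) (Fin M) F) :
    ∃ U V : Matrix (Fin M) (Fin M) F, IsUnit U.det ∧ IsUnit V.det ∧
      A = U * Dr F M A.rank * V := by
  classical
  set r := A.rank with hr
  set f := A.mulVecLin with hf
  have hrange : Module.finrank F (LinearMap.range f) = r := rfl
  have hrM : r ≤ M := by
    have := Matrix.rank_le_card_width A
    simpa using this
  have hdim : Module.finrank F (Fin M → F) = M := by simp
  have hker : Module.finrank F (LinearMap.ker f) = M - r := by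
    have := LinearMap.finrank_range_add_finrank_ker f
    rw [hrange, hdim] at this
    omega
  obtain ⟨C, hC⟩ := Submodule.exists_isCompl (LinearMap.ker f)
  have hCr : Module.finrank F C = r := by
    have := Submodule.finrank_add_eq_of_isCompl hC
    rw [hker, hdim] at this
    omega
  obtain ⟨D, hD⟩ := Submodule.exists_isCompl (LinearMap.range f)
  have hDr : Module.finrank F D = M - r := by
    have := Submodule.finrank_add_eq_of_isCompl hD
    rw [hrange, hdim] at this
    omega
  -- f restricted to C
  set fC := f.domRestrict C with hfC
  have hinj : Function.Injective fC := by
    intro x y hxy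
    have hmem : (x - y : Fin M → F) ∈ LinearMap.ker f ⊓ C := by
      constructor
      · have hfx : f (x : Fin M → F) = f (y : Fin M → F) := hxy
        have : f ((x : Fin M → F) - (y : Fin M → F)) = 0 := by
          rw [map_sub, hfx, sub_self]
        exact LinearMap.mem_ker.mpr this
      · exact Submodule.sub_mem C x.2 y.2
    rw [hC.inf_eq_bot] at hmem
    have h0 : (x - y : Fin M → F) = 0 := by simpa using hmem
    exact Subtype.ext (sub_eq_zero.mp h0)
  have hrangeC : LinearMap.range fC = LinearMap.range f := by
    apply le_antisymm
    · rintro y ⟨x, rfl⟩; exact ⟨x, rfl⟩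
    · rintro y ⟨x, rfl⟩
      have hx : (x : Fin M → F) ∈ LinearMap.ker f ⊔ C := by
        rw [hC.sup_eq_top]; trivial
      obtain ⟨k, hk, c, hc, rfl⟩ := Submodule.mem_sup.mp hx
      refine ⟨⟨c, hc⟩, ?_⟩
      simp only [hfC, LinearMap.domRestrict_apply, map_add]
      rw [LinearMap.mem_ker.mp hk, zero_add]
  let eC : C ≃ₗ[F] LinearMap.range f :=
    (LinearEquiv.ofInjective fC hinj).trans (LinearEquiv.ofEq _ _ hrangeC)
  have heC : ∀ x : C, (eC x : Fin M → F) = f x := fun x => rfl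
  -- bases
  let bC : Module.Basis (Fin r) F C := Module.finBasisOfFinrankEq F C hCr
  let bK : Module.Basis (Fin (M - r)) F (LinearMap.ker f) := Module.finBasisOfFinrankEq F _ hker
  let bR : Module.Basis (Fin r) F (LinearMap.range f) := bC.map eC
  let bD : Module.Basis (Fin (M - r)) F D := Module.finBasisOfFinrankEq F D hDr
  let bDom : Module.Basis (Fin r ⊕ Fin (M - r)) F (Fin M → F) :=
    (bC.prod bK).map (Submodule.prodEquivOfIsCompl C (LinearMap.ker f) hC.symm)
  let bCod : Module.Basis (Fin r ⊕ Fin (M - r)) F (Fin M → F) :=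
    (bR.prod bD).map (Submodule.prodEquivOfIsCompl (LinearMap.range f) D hD)
  have hbDom_inl : ∀ j, bDom (Sum.inl j) = (bC j : Fin M → F) := by
    intro j
    simp [bDom, Module.Basis.prod_apply, Submodule.coe_prodEquivOfIsCompl]
  have hbDom_inr : ∀ j, bDom (Sum.inr j) = (bK j : Fin M → F) := by
    intro j
    simp [bDom, Module.Basis.prod_apply, Submodule.coe_prodEquivOfIsCompl]
  have hbCod_inl : ∀ j, bCod (Sum.inl j) = (bR j : Fin M → F) := by
    intro j
    simp [bCod, Module.Basis.prod_apply, Submodule.coe_prodEquivOfIsCompl]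
  -- the matrix of f in these bases
  have key : LinearMap.toMatrix bDom bCod f =
      Matrix.diagonal (Sum.elim (fun _ : Fin r => (1 : F)) (fun _ : Fin (M - r) => 0)) := by
    ext i j
    rw [LinearMap.toMatrix_apply]
    cases j with
    | inl j =>
      have : f (bDom (Sum.inl j)) = bCod (Sum.inl j) := by
        rw [hbDom_inl, hbCod_inl]
        have : bR j = eC (bC j) := by simp [bR]
        rw [this, heC]
      rw [this, Module.Basis.repr_self]
      rcases i with i | i
      · by_cases hij : i = j
        · subst hij; simp [Matrix.diagonal_apply]
        · have hne : (Sum.inl i : Fin r ⊕ Fin (M - r)) ≠ Sum.inl j := by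
            simpa using hij
          simp [Matrix.diagonal_apply, hne, Finsupp.single_apply, Ne.symm hne]
      · simp [Matrix.diagonal_apply, Finsupp.single_apply]
    | inr j =>
      have : f (bDom (Sum.inr j)) = 0 := by
        rw [hbDom_inr]
        exact LinearMap.mem_ker.mp (bK j).2
      rw [this, map_zero]
      rcases i with i | i <;> simp [Matrix.diagonal_apply]
  -- reindex to Fin M
  have hM' : r + (M - r) = M := by omega
  let e : Fin r ⊕ Fin (M - r) ≃ Fin M := finSumFinEquiv.trans (finCongr hM')
  let bDom' := bDom.reindex e
  let bCod' := bCod.reindex e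
  have key' : LinearMap.toMatrix bDom' bCod' f = Dr F M r := by
    ext i j
    rw [LinearMap.toMatrix_apply]
    have h1 : bDom' j = bDom (e.symm j) := by simp [bDom']
    have h2 : ∀ x, (bCod'.repr x) i = (bCod.repr x) (e.symm i) := fun x =>
      Module.Basis.repr_reindex_apply _ _ _ _
    rw [h1, h2, ← LinearMap.toMatrix_apply, key]
    -- now a pure diagonal computation
    have hval : ∀ s : Fin r ⊕ Fin (M - r),
        Sum.elim (fun _ : Fin r => (1 : F)) (fun _ : Fin (M - r) => 0) s =
          (if ((e s : Fin M) : ℕ) < r then (1 : F) else 0) := by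
      intro s
      rcases s with a | a
      · have : ((e (Sum.inl a) : Fin M) : ℕ) = a.1 := by
          simp [e, finSumFinEquiv]
        simp [this, a.2]
      · have : ((e (Sum.inr a) : Fin M) : ℕ) = r + a.1 := by
          simp [e, finSumFinEquiv]
        simp [this]
    rcases eq_or_ne (e.symm i) (e.symm j) with h | h
    · have hij : i = j := e.symm.injective h
      subst hij
      rw [Matrix.diagonal_apply_eq, Dr, Matrix.diagonal_apply_eq, hval]
      simp
    · have hij : i ≠ j := fun hc => h (by rw [hc])
      rw [Matrix.diagonal_apply_ne _ h, Dr, Matrix.diagonal_apply_ne _ hij]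
  -- change of bases
  let std : Module.Basis (Fin M) F (Fin M → F) := Pi.basisFun F (Fin M)
  have hA : LinearMap.toMatrix std std f = A := by
    rw [show std = Pi.basisFun F (Fin M) from rfl, LinearMap.toMatrix_eq_toMatrix']
    rw [hf, ← Matrix.toLin'_apply']
    exact LinearMap.toMatrix'_toLin' A
  have hcomp1 : LinearMap.toMatrix std std f =
      LinearMap.toMatrix bDom' std (LinearMap.id ∘ₗ f) * LinearMap.toMatrix std bDom' LinearMap.id := by
    rw [← LinearMap.toMatrix_comp std bDom' std, LinearMap.comp_id, LinearMap.id_comp]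
  have hcomp2 : LinearMap.toMatrix bDom' std (LinearMap.id ∘ₗ f) =
      LinearMap.toMatrix bCod' std LinearMap.id * LinearMap.toMatrix bDom' bCod' f := by
    rw [← LinearMap.toMatrix_comp bDom' bCod' std]
  refine ⟨LinearMap.toMatrix bCod' std LinearMap.id, LinearMap.toMatrix std bDom' LinearMap.id,
    ?_, ?_, ?_⟩
  · have : LinearMap.toMatrix bCod' std LinearMap.id * LinearMap.toMatrix std bCod' LinearMap.id
        = 1 := by
      rw [← LinearMap.toMatrix_comp std bCod' std, LinearMap.id_comp, LinearMap.toMatrix_id]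
    have hdet : (LinearMap.toMatrix bCod' std LinearMap.id).det *
        (LinearMap.toMatrix std bCod' LinearMap.id).det = 1 := by
      rw [← Matrix.det_mul, this, Matrix.det_one]
    exact IsUnit.of_mul_eq_one _ hdet
  · have : LinearMap.toMatrix std bDom' LinearMap.id * LinearMap.toMatrix bDom' std LinearMap.id
        = 1 := by
      rw [← LinearMap.toMatrix_comp bDom' std bDom', LinearMap.id_comp, LinearMap.toMatrix_id]
    have hdet : (LinearMap.toMatrix std bDom' LinearMap.id).det *
        (LinearMap.toMatrix bDom' std LinearMap.id).det = 1 := by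
      rw [← Matrix.det_mul, this, Matrix.det_one]
    exact IsUnit.of_mul_eq_one _ hdet
  · rw [← key', ← hA, hcomp1, hcomp2]

/-- Number of recoding-matrix tuples giving rank ≥ t, starting from accumulated matrix `A`. -/
noncomputable def Psi (t : ℕ) (n : ℕ) (ds : Fin n → Fin M → Bool)
    (A : Matrix (Fin M) (Fin M) F) : ℕ :=
  ∑ Ts : Fin n → Matrix (Fin M) (Fin M) F,
    if t ≤ (A * (List.ofFn (fun i => Ts i * diagOf F (ds i))).prod).rank then 1 else 0

lemma sum_g_rank (g : ℕ → ℕ) (A B : Matrix (Fin M) (Fin M) F) :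
    ∑ T : Matrix (Fin M) (Fin M) F, g ((A * T * B).rank)
      = ∑ T : Matrix (Fin M) (Fin M) F, g ((Dr F M A.rank * T * B).rank) := by
  classical
  obtain ⟨U, V, hU, hV, hA⟩ := exists_snf A
  have hVu : IsUnit V := (Matrix.isUnit_iff_isUnit_det V).mpr hV
  obtain ⟨v, rfl⟩ := hVu
  have step : ∀ T : Matrix (Fin M) (Fin M) F,
      (A * T * B).rank = (Dr F M A.rank * ((v : Matrix (Fin M) (Fin M) F) * T) * B).rank := by
    intro T
    have hmul : A * T * B = U * (Dr F M A.rank * ((v : Matrix (Fin M) (Fin M) F) * T) * B) := by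
      conv_lhs => rw [hA]
      simp only [Matrix.mul_assoc]
    rw [hmul, Matrix.rank_mul_eq_right_of_isUnit_det U _ hU]
  have h1 : ∑ T : Matrix (Fin M) (Fin M) F, g ((A * T * B).rank)
      = ∑ T : Matrix (Fin M) (Fin M) F,
          g ((Dr F M A.rank * ((v : Matrix (Fin M) (Fin M) F) * T) * B).rank) :=
    Finset.sum_congr rfl fun T _ => congrArg g (step T)
  rw [h1]
  exact Fintype.sum_equiv
    ⟨fun T => (v : Matrix (Fin M) (Fin M) F) * T,
     fun T => ((v⁻¹ : (Matrix (Fin M) (Fin M) F)ˣ) : Matrix (Fin M) (Fin M) F) * T,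
     fun T => by
      show ((v⁻¹ : (Matrix (Fin M) (Fin M) F)ˣ) : Matrix (Fin M) (Fin M) F)
        * ((v : Matrix (Fin M) (Fin M) F) * T) = T
      rw [← Matrix.mul_assoc]
      simp only [Units.inv_mul, one_mul],
     fun T => by
      show (v : Matrix (Fin M) (Fin M) F)
        * (((v⁻¹ : (Matrix (Fin M) (Fin M) F)ˣ) : Matrix (Fin M) (Fin M) F) * T) = T
      rw [← Matrix.mul_assoc]
      simp only [Units.mul_inv, one_mul]⟩
    _ _ (fun T => rfl)

lemma psi_succ (t : ℕ) {n : ℕ} (ds : Fin (n + 1) → Fin M → Bool)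
    (A : Matrix (Fin M) (Fin M) F) :
    Psi t (n + 1) ds A = ∑ T₀ : Matrix (Fin M) (Fin M) F,
      Psi t n (fun i => ds i.succ) (A * T₀ * diagOf F (ds 0)) := by
  classical
  unfold Psi
  rw [← Equiv.sum_comp (Fin.consEquiv (fun _ : Fin (n + 1) => Matrix (Fin M) (Fin M) F))]
  rw [Fintype.sum_prod_type]
  refine Finset.sum_congr rfl fun T₀ _ => Finset.sum_congr rfl fun rest _ => ?_
  congr 2
  have hlist : (List.ofFn fun i : Fin (n + 1) =>
        (Fin.consEquiv (fun _ : Fin (n + 1) => Matrix (Fin M) (Fin M) F)) (T₀, rest) i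
          * diagOf F (ds i)).prod
      = (T₀ * diagOf F (ds 0)) *
        (List.ofFn fun i : Fin n => rest i * diagOf F (ds i.succ)).prod := by
    rw [List.ofFn_succ, List.prod_cons]
    simp [Fin.consEquiv, Fin.cons_zero, Fin.cons_succ]
  rw [hlist]
  simp only [Matrix.mul_assoc]

lemma psi_mono (t n : ℕ) : ∀ (ds ds' : Fin n → Fin M → Bool),
    (∀ i m, ds i m = true → ds' i m = true) →
    ∀ A A' : Matrix (Fin M) (Fin M) F, A.rank ≤ A'.rank →
    Psi t n ds A ≤ Psi t n ds' A' := by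
  induction n with
  | zero =>
    intro ds ds' h A A' hA
    unfold Psi
    rw [Fintype.sum_unique, Fintype.sum_unique]
    simp only [List.ofFn_zero, List.prod_nil, Matrix.mul_one]
    split_ifs with h1 h2 <;> omega
  | succ n IH =>
    intro ds ds' h A A' hA
    rw [psi_succ, psi_succ]
    set g : ℕ → ℕ := fun r => Psi t n (fun i => ds' i.succ) (Dr F M r) with hg
    have htl : ∀ (i : Fin n) m, ds i.succ m = true → ds' i.succ m = true :=
      fun i m => h i.succ m
    have htl' : ∀ (i : Fin n) m, ds' i.succ m = true → ds' i.succ m = true := fun _ _ hh => hh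
    have hg_mono : ∀ ⦃r r' : ℕ⦄, r ≤ r' → g r ≤ g r' := fun r r' hrr =>
      IH _ _ htl' _ _ (rank_Dr_le hrr)
    have hg_eval : ∀ X : Matrix (Fin M) (Fin M) F,
        Psi t n (fun i => ds' i.succ) X = g X.rank := by
      intro X
      have hXM : X.rank ≤ M := by simpa using Matrix.rank_le_card_width X
      have h1 : (Dr F M X.rank).rank = X.rank := rank_Dr_of_le hXM
      exact le_antisymm (IH _ _ htl' _ _ (by rw [h1])) (IH _ _ htl' _ _ (by rw [h1]))
    calc ∑ T₀ : Matrix (Fin M) (Fin M) F, Psi t n (fun i => ds i.succ) (A * T₀ * diagOf F (ds 0))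
        ≤ ∑ T₀ : Matrix (Fin M) (Fin M) F,
            Psi t n (fun i => ds' i.succ) (A * T₀ * diagOf F (ds 0)) :=
          Finset.sum_le_sum fun T₀ _ => IH _ _ htl _ _ le_rfl
      _ = ∑ T₀ : Matrix (Fin M) (Fin M) F, g ((A * T₀ * diagOf F (ds 0)).rank) :=
          Finset.sum_congr rfl fun T₀ _ => hg_eval _
      _ = ∑ T₀ : Matrix (Fin M) (Fin M) F, g ((Dr F M A.rank * T₀ * diagOf F (ds 0)).rank) :=
          sum_g_rank g A _
      _ ≤ ∑ T₀ : Matrix (Fin M) (Fin M) F, g ((Dr F M A'.rank * T₀ * diagOf F (ds' 0)).rank) := by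
          refine Finset.sum_le_sum fun T₀ _ => hg_mono ?_
          have hEq : Dr F M A.rank * (Dr F M A'.rank * T₀ * diagOf F (ds' 0)) * diagOf F (ds 0)
              = Dr F M A.rank * T₀ * diagOf F (ds 0) := by
            simp only [Matrix.mul_assoc]
            rw [diagOf_mul_diagOf (h 0), ← Matrix.mul_assoc (Dr F M A.rank) (Dr F M A'.rank),
              Dr_mul_Dr hA]
          calc (Dr F M A.rank * T₀ * diagOf F (ds 0)).rank
              = (Dr F M A.rank * (Dr F M A'.rank * T₀ * diagOf F (ds' 0))
                  * diagOf F (ds 0)).rank := by rw [hEq]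
            _ ≤ (Dr F M A.rank * (Dr F M A'.rank * T₀ * diagOf F (ds' 0))).rank :=
                Matrix.rank_mul_le_left _ _
            _ ≤ (Dr F M A'.rank * T₀ * diagOf F (ds' 0)).rank := Matrix.rank_mul_le_right _ _
      _ = ∑ T₀ : Matrix (Fin M) (Fin M) F, g ((A' * T₀ * diagOf F (ds' 0)).rank) :=
          (sum_g_rank g A' _).symm
      _ = ∑ T₀ : Matrix (Fin M) (Fin M) F,
            Psi t n (fun i => ds' i.succ) (A' * T₀ * diagOf F (ds' 0)) :=
          Finset.sum_congr rfl fun T₀ _ => (hg_eval _).symm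

section Bernoulli

variable {ι : Type} [Fintype ι] [DecidableEq ι]

lemma bern_step (G : (ι → Bool) → ℝ)
    (hGmono : ∀ d d' : ι → Bool, (∀ i, d i = true → d' i = true) → G d ≤ G d')
    (b c : ι → ℝ) (j : ι) (hoff : ∀ i, i ≠ j → b i = c i)
    (hb : ∀ i, 0 ≤ b i ∧ b i ≤ 1) (hj : c j ≤ b j) :
    ∑ d : ι → Bool, (∏ i, if d i then 1 - b i else b i) * G d
      ≤ ∑ d : ι → Bool, (∏ i, if d i then 1 - c i else c i) * G d := by
  classical
  set R : (ι → Bool) → ℝ := fun d => ∏ i ∈ Finset.univ.erase j, (if d i then 1 - b i else b i)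
    with hR
  have hRoff : ∀ (p : ι → ℝ), (∀ i, i ≠ j → p i = b i) → ∀ d : ι → Bool,
      (∏ i ∈ Finset.univ.erase j, (if d i then 1 - p i else p i)) = R d := by
    intro p hp d
    refine Finset.prod_congr rfl fun i hi => ?_
    rw [hp i (Finset.ne_of_mem_erase hi)]
  have hRupd : ∀ (d : ι → Bool) (v : Bool), R (Function.update d j v) = R d := by
    intro d v
    refine Finset.prod_congr rfl fun i hi => ?_
    rw [Function.update_of_ne (Finset.ne_of_mem_erase hi)]
  have hR0 : ∀ d, 0 ≤ R d := by
    intro d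
    refine Finset.prod_nonneg fun i _ => ?_
    rcases hb i with ⟨h1, h2⟩
    split_ifs <;> linarith
  have hsplit : ∀ (p : ι → ℝ), (∀ i, i ≠ j → p i = b i) →
      ∑ d : ι → Bool, (∏ i, if d i then 1 - p i else p i) * G d
        = ∑ d ∈ Finset.univ.filter (fun d : ι → Bool => d j = true),
            R d * ((1 - p j) * G d + p j * G (Function.update d j false)) := by
    intro p hp
    rw [← Finset.sum_filter_add_sum_filter_not Finset.univ (fun d : ι → Bool => d j = true)]
    have hTrue : ∑ d ∈ Finset.univ.filter (fun d : ι → Bool => d j = true),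
        (∏ i, if d i then 1 - p i else p i) * G d
        = ∑ d ∈ Finset.univ.filter (fun d : ι → Bool => d j = true),
            R d * ((1 - p j) * G d) := by
      refine Finset.sum_congr rfl fun d hd => ?_
      have hdj : d j = true := (Finset.mem_filter.mp hd).2
      rw [← Finset.mul_prod_erase Finset.univ _ (Finset.mem_univ j), hdj, if_pos rfl,
        hRoff p hp d]
      ring
    have hFalse : ∑ d ∈ Finset.univ.filter (fun d : ι → Bool => ¬ d j = true),
        (∏ i, if d i then 1 - p i else p i) * G d
        = ∑ d ∈ Finset.univ.filter (fun d : ι → Bool => d j = true),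
            R d * (p j * G (Function.update d j false)) := by
      refine Finset.sum_bij' (i := fun d _ => Function.update d j true)
        (j := fun d _ => Function.update d j false) ?_ ?_ ?_ ?_ ?_
      · intro d hd
        simp [Function.update_self]
      · intro d hd
        simp [Function.update_self]
      · intro d hd
        have hdj : d j = false := by
          have := (Finset.mem_filter.mp hd).2
          simpa using this
        show Function.update (Function.update d j true) j false = d
        rw [Function.update_idem, ← hdj, Function.update_eq_self]
      · intro d hd
        have hdj : d j = true := (Finset.mem_filter.mp hd).2
        show Function.update (Function.update d j false) j true = d
        rw [Function.update_idem, ← hdj, Function.update_eq_self]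
      · intro d hd
        have hdj : d j = false := by
          have := (Finset.mem_filter.mp hd).2
          simpa using this
        rw [← Finset.mul_prod_erase Finset.univ _ (Finset.mem_univ j), hdj]
        have h1 : (∏ i ∈ Finset.univ.erase j, (if d i then 1 - p i else p i)) = R d :=
          hRoff p hp d
        have h2 : R (Function.update d j true) = R d := hRupd d true
        have h3 : Function.update (Function.update d j true) j false = d := by
          rw [Function.update_idem, ← hdj, Function.update_eq_self]
        rw [h1, h2, h3]
        simp only [Bool.false_eq_true, if_false]
        ring
    rw [hTrue, hFalse, ← Finset.sum_add_distrib]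
    refine Finset.sum_congr rfl fun d hd => ?_
    ring
  rw [hsplit b (fun _ _ => rfl), hsplit c (fun i hi => (hoff i hi).symm)]
  refine Finset.sum_le_sum fun d hd => ?_
  refine mul_le_mul_of_nonneg_left ?_ (hR0 d)
  have hGle : G (Function.update d j false) ≤ G d := by
    refine hGmono _ _ fun i hi => ?_
    by_cases hij : i = j
    · subst hij
      rw [Function.update_self] at hi
      exact absurd hi (by simp)
    · rwa [Function.update_of_ne hij] at hi
  nlinarith [hGle, hj]

lemma bern_mono (G : (ι → Bool) → ℝ)
    (hGmono : ∀ d d' : ι → Bool, (∀ i, d i = true → d' i = true) → G d ≤ G d')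
    (a a' : ι → ℝ) (ha : ∀ i, 0 ≤ a i ∧ a i ≤ 1) (ha' : ∀ i, 0 ≤ a' i ∧ a' i ≤ 1)
    (hle : ∀ i, a i ≤ a' i) :
    ∑ d : ι → Bool, (∏ i, if d i then 1 - a' i else a' i) * G d
      ≤ ∑ d : ι → Bool, (∏ i, if d i then 1 - a i else a i) * G d := by
  classical
  have key : ∀ u : Finset ι,
      ∑ d : ι → Bool, (∏ i, if d i then 1 - a' i else a' i) * G d
        ≤ ∑ d : ι → Bool,
            (∏ i, if d i then 1 - (if i ∈ u then a i else a' i)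
              else (if i ∈ u then a i else a' i)) * G d := by
    intro u
    induction u using Finset.induction_on with
    | empty => simp
    | @insert j u hj IH =>
      refine le_trans IH ?_
      refine bern_step G hGmono _ _ j ?_ ?_ ?_
      · intro i hi
        simp [Finset.mem_insert, hi]
      · intro i
        by_cases hiu : i ∈ u <;> simp [hiu, ha i, ha' i]
      · simp [hj, hle j]
  have := key Finset.univ
  simpa using this
end Bernoulli

end LineNetAux


/-- Degrading any channels of the line network makes the rank of the
transfer matrix stochastically smaller: if `ε_i ≤ ε′_i` for all `i` then
`Pr{rank(H(ε′)) ≥ t} ≤ Pr{rank(H(ε)) ≥ t}` for every `0 ≤ t ≤ M`. -/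
theorem line_network_rank_stochastically_smaller
    (q M E : ℕ) (hq : IsPrimePow q) (hM : 1 ≤ M) (hE : 2 ≤ E)
    (F : Type) [Field F] [Fintype F] (hF : Fintype.card F = q)
    (ε ε' : Fin E → ℝ)
    (hε : ∀ i, 0 ≤ ε i ∧ ε i ≤ 1) (hε' : ∀ i, 0 ≤ ε' i ∧ ε' i ≤ 1)
    (hle : ∀ i, ε i ≤ ε' i) (t : ℕ) (ht : t ≤ M) :
    linePrRankGe F M E (by omega) ε' t ≤ linePrRankGe F M E (by omega) ε t := by
  classical
  have hE1 : (1 : ℕ) ≤ E := by omega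
  set c : ℝ := (1 : ℝ) / (Fintype.card (Fin (E - 1) → Matrix (Fin M) (Fin M) F) : ℝ) with hc
  have hc0 : 0 ≤ c := by positivity
  have hpf : ∀ i : Fin (E - 1), i.1 + 1 < E := fun i => by have := i.isLt; omega
  set ds : (Fin E → Fin M → Bool) → Fin (E - 1) → Fin M → Bool :=
    fun d i => d ⟨i.1 + 1, hpf i⟩ with hds
  set Gv : (Fin E → Fin M → Bool) → ℝ := fun d =>
    c * (LineNetAux.Psi t (E - 1) (ds d) (diagOf F (d ⟨0, hE1⟩)) : ℝ) with hGv
  have hrepr : ∀ η : Fin E → ℝ, linePrRankGe F M E hE1 η t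
      = ∑ d : Fin E → Fin M → Bool,
          (∏ i, ∏ m, if d i m then 1 - η i else η i) * Gv d := by
    intro η
    unfold linePrRankGe
    refine Finset.sum_congr rfl fun d _ => ?_
    have hcast : ((LineNetAux.Psi t (E - 1) (ds d) (diagOf F (d ⟨0, hE1⟩)) : ℕ) : ℝ)
        = ∑ T : Fin (E - 1) → Matrix (Fin M) (Fin M) F,
            (if t ≤ (lineH F hE1 d T).rank then (1 : ℝ) else 0) := by
      unfold LineNetAux.Psi
      push_cast
      rfl
    calc ∑ T : Fin (E - 1) → Matrix (Fin M) (Fin M) F,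
        (∏ i, ∏ m, if d i m then 1 - η i else η i) * c *
          (if t ≤ (lineH F hE1 d T).rank then (1 : ℝ) else 0)
        = ((∏ i, ∏ m, if d i m then 1 - η i else η i) * c) *
            ∑ T : Fin (E - 1) → Matrix (Fin M) (Fin M) F,
              (if t ≤ (lineH F hE1 d T).rank then (1 : ℝ) else 0) := by
          rw [Finset.mul_sum]
      _ = (∏ i, ∏ m, if d i m then 1 - η i else η i) * Gv d := by
          rw [← hcast, hGv]
          ring
  rw [hrepr ε, hrepr ε']
  have hGvmono : ∀ d d' : Fin E → Fin M → Bool,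
      (∀ i m, d i m = true → d' i m = true) → Gv d ≤ Gv d' := by
    intro d d' hdd
    rw [hGv]
    refine mul_le_mul_of_nonneg_left ?_ hc0
    have hrank : (diagOf F (d ⟨0, hE1⟩)).rank ≤ (diagOf F (d' ⟨0, hE1⟩)).rank := by
      have h0 : diagOf F (d' ⟨0, hE1⟩) * diagOf F (d ⟨0, hE1⟩) = diagOf F (d ⟨0, hE1⟩) :=
        LineNetAux.diagOf_mul_diagOf (fun m => hdd _ m)
      calc (diagOf F (d ⟨0, hE1⟩)).rank
          = (diagOf F (d' ⟨0, hE1⟩) * diagOf F (d ⟨0, hE1⟩)).rank := by rw [h0]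
        _ ≤ (diagOf F (d' ⟨0, hE1⟩)).rank := Matrix.rank_mul_le_left _ _
    exact_mod_cast LineNetAux.psi_mono t (E - 1) (ds d) (ds d')
      (fun i m => hdd _ m) _ _ hrank
  let e : (Fin E × Fin M → Bool) ≃ (Fin E → Fin M → Bool) := Equiv.curry _ _ _
  have hsum : ∀ η : Fin E → ℝ,
      ∑ d : Fin E → Fin M → Bool, (∏ i, ∏ m, if d i m then 1 - η i else η i) * Gv d
        = ∑ db : Fin E × Fin M → Bool,
            (∏ p : Fin E × Fin M, if db p then 1 - η p.1 else η p.1) * Gv (e db) := by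
    intro η
    rw [← Equiv.sum_comp e (fun d => (∏ i, ∏ m, if d i m then 1 - η i else η i) * Gv d)]
    refine Finset.sum_congr rfl fun db _ => ?_
    congr 1
    exact (Fintype.prod_prod_type (fun p : Fin E × Fin M =>
      if db p then 1 - η p.1 else η p.1)).symm
  rw [hsum ε, hsum ε']
  exact LineNetAux.bern_mono (fun db => Gv (e db))
    (fun db db' hdb => hGvmono (e db) (e db') (fun i m => hdb (i, m)))
    (fun p => ε p.1) (fun p => ε' p.1)
    (fun p => hε p.1) (fun p => hε' p.1) (fun p => hle p.1)
end

section
/- Let q be a prime power, M ≥ 1 and E ≥ 2 integers. For ε ∈ [0,1]^E, let H(ε) = E_1·T_2·E_2·T_3·E_3 ⋯ T_E·E_E be the line-network transfer matrix, and define C(ε) = ∑_{t=1}^{M} Pr{ rank(H(ε)) ≥ t }. Then for every ε ∈ [0,1]^E and every real number C′ with 0 ≤ C′ ≤ C(ε), there exists ε′ ∈ [0,1]^E with ε_i ≤ ε′_i for all i such that C(ε′) = C′ and Pr{ rank(H(ε′)) ≥ t } ≤ Pr{ rank(H(ε)) ≥ t } for every t = 0, 1, …, M. (In the paper's terminology: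 batched network codes whose inner code is random linear network coding over a line network are admissible — for any achievable rank distribution h of capacity C and any C′ ≤ C, there is an achievable rank distribution h′ of capacity C′ with h′ ⪯ h.) -/
/-- The capacity `C(ε) = ∑_{t=1}^M Pr{rank(H(ε)) ≥ t}`. -/
noncomputable def lineCap (F : Type) [Field F] [Fintype F] (M E : ℕ) (hE : 1 ≤ E)
    (ε : Fin E → ℝ) : ℝ :=
  ∑ t ∈ Finset.Icc 1 M, linePrRankGe F M E hE ε t

open Finset

section ExchangeLemmas

variable {ι : Type*} [Fintype ι] [DecidableEq ι]

/-- Single-coordinate exchange step for weighted sums over Boolean cubes. -/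
private lemma step_le (P : (ι → Bool) → ℝ) (hP0 : ∀ d, 0 ≤ P d)
    (a : ι) (w1 w2 : ι → Bool → ℝ)
    (hw1 : ∀ j b, 0 ≤ w1 j b)
    (hoff : ∀ j, j ≠ a → w1 j = w2 j)
    (ht : w2 a true ≤ w1 a true)
    (hf : w2 a false - w1 a false ≤ w1 a true - w2 a true)
    (hPa : ∀ d, P (Function.update d a false) ≤ P (Function.update d a true)) :
    ∑ d : ι → Bool, (∏ j, w2 j (d j)) * P d ≤
      ∑ d : ι → Bool, (∏ j, w1 j (d j)) * P d := by
  set e := Equiv.funSplitAt a Bool with he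
  have ha1 : ∀ p : Bool × ({j // j ≠ a} → Bool), e.symm p a = p.1 := fun p =>
    congrArg (fun q : Bool × ({j // j ≠ a} → Bool) => q.1) (e.apply_symm_apply p)
  have ha2 : ∀ (p : Bool × ({j // j ≠ a} → Bool)) (j : ι) (h : j ≠ a),
      e.symm p j = p.2 ⟨j, h⟩ := fun p j h =>
    congrFun (congrArg (fun q : Bool × ({j // j ≠ a} → Bool) => q.2) (e.apply_symm_apply p))
      ⟨j, h⟩
  have hsum : ∀ w : ι → Bool → ℝ,
      ∑ d : ι → Bool, (∏ j, w j (d j)) * P d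
        = ∑ r : {j // j ≠ a} → Bool,
            ((∏ j, w j (e.symm (true, r) j)) * P (e.symm (true, r)) +
             (∏ j, w j (e.symm (false, r) j)) * P (e.symm (false, r))) := by
    intro w
    rw [← Equiv.sum_comp e.symm (fun d => (∏ j, w j (d j)) * P d),
      Fintype.sum_prod_type, Fintype.sum_bool, ← Finset.sum_add_distrib]
  rw [hsum w1, hsum w2]
  apply Finset.sum_le_sum
  intro r _
  set dt := e.symm (true, r) with hdt
  set df := e.symm (false, r) with hdf
  have hdta : dt a = true := ha1 _
  have hdfa : df a = false := ha1 _
  have hsame : ∀ (j : ι), j ≠ a → dt j = df j := by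
    intro j h; rw [hdt, hdf, ha2 _ j h, ha2 _ j h]
  have hprod : ∀ (w : ι → Bool → ℝ) (d : ι → Bool),
      ∏ j, w j (d j) = w a (d a) * ∏ j ∈ univ.erase a, w j (d j) := fun w d =>
    (Finset.mul_prod_erase univ (fun j => w j (d j)) (mem_univ a)).symm
  set R := ∏ j ∈ univ.erase a, w1 j (dt j) with hR
  have hR0 : 0 ≤ R := Finset.prod_nonneg fun j _ => hw1 j _
  have hRdf : ∏ j ∈ univ.erase a, w1 j (df j) = R := by
    apply Finset.prod_congr rfl
    intro j hj
    rw [hsame j (Finset.ne_of_mem_erase hj)]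
  have hR2t : ∏ j ∈ univ.erase a, w2 j (dt j) = R := by
    apply Finset.prod_congr rfl
    intro j hj
    rw [← hoff j (Finset.ne_of_mem_erase hj)]
  have hR2f : ∏ j ∈ univ.erase a, w2 j (df j) = R := by
    apply Finset.prod_congr rfl
    intro j hj
    rw [← hoff j (Finset.ne_of_mem_erase hj), hsame j (Finset.ne_of_mem_erase hj)]
  have hdf_up : df = Function.update dt a false := by
    funext j
    by_cases h : j = a
    · subst h; rw [hdfa, Function.update_self]
    · rw [Function.update_of_ne h, hsame j h]
  have hdt_up : dt = Function.update dt a true := by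
    funext j
    by_cases h : j = a
    · subst h; rw [hdta, Function.update_self]
    · rw [Function.update_of_ne h]
  have hPdf : P df ≤ P dt := by
    rw [hdf_up]; nth_rewrite 2 [hdt_up]; exact hPa dt
  rw [hprod w1 dt, hprod w1 df, hprod w2 dt, hprod w2 df, hdta, hdfa, hRdf, hR2t, hR2f]
  have h1 : 0 ≤ R * ((w1 a true - w2 a true - (w2 a false - w1 a false)) * P df) :=
    mul_nonneg hR0 (mul_nonneg (by linarith) (hP0 df))
  have h2 : 0 ≤ R * ((w1 a true - w2 a true) * (P dt - P df)) :=
    mul_nonneg hR0 (mul_nonneg (by linarith) (by linarith))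
  nlinarith [h1, h2]

/-- Chain of exchanges: replacing weights `u` by `v` coordinate by coordinate. -/
private lemma chain_le (P : (ι → Bool) → ℝ) (hP0 : ∀ d, 0 ≤ P d)
    (u v : ι → Bool → ℝ) (hu : ∀ j b, 0 ≤ u j b) (hv : ∀ j b, 0 ≤ v j b)
    (hcond : ∀ a : ι, (u a = v a) ∨
      ((v a true ≤ u a true) ∧ (v a false - u a false ≤ u a true - v a true) ∧
        ∀ d, P (Function.update d a false) ≤ P (Function.update d a true))) :
    ∑ d : ι → Bool, (∏ j, v j (d j)) * P d ≤ ∑ d : ι → Bool, (∏ j, u j (d j)) * P d := by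
  suffices h : ∀ S : Finset ι,
      ∑ d : ι → Bool, (∏ j, (if j ∈ S then v j (d j) else u j (d j))) * P d
        ≤ ∑ d : ι → Bool, (∏ j, u j (d j)) * P d by
    simpa using h univ
  intro S
  induction S using Finset.induction_on with
  | empty => simp
  | @insert a S ha ih =>
    refine le_trans ?_ ih
    rcases hcond a with heq | ⟨h1, h2, h3⟩
    · apply le_of_eq
      apply Finset.sum_congr rfl
      intro d _
      congr 1
      apply Finset.prod_congr rfl
      intro j _
      by_cases hj : j = a
      · subst hj
        simp [ha, heq]
      · simp [Finset.mem_insert, hj]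
    · apply step_le P hP0 a
        (fun j b => if j ∈ S then v j b else u j b)
        (fun j b => if j ∈ insert a S then v j b else u j b)
      · intro j b; split
        · exact hv j b
        · exact hu j b
      · intro j hj
        funext b
        by_cases hjS : j ∈ S <;> simp [Finset.mem_insert, hj, hjS]
      · simp [ha, h1]
      · simp only [Finset.mem_insert, true_or, if_pos, ha, if_neg]
        simpa [ha] using h2
      · exact h3

end ExchangeLemmas

/-- Rank of the line-network matrix is monotone in the first erasure pattern. -/
private lemma lineH_rank_mono (F : Type) [Field F] {M E : ℕ} (hE : 1 ≤ E)
    (d d' : Fin E → Fin M → Bool) (T : Fin (E - 1) → Matrix (Fin M) (Fin M) F)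
    (hrest : ∀ i, i ≠ (⟨0, hE⟩ : Fin E) → d i = d' i)
    (h0 : ∀ m, d ⟨0, hE⟩ m = true → d' ⟨0, hE⟩ m = true) :
    (lineH F hE d T).rank ≤ (lineH F hE d' T).rank := by
  have hL : (List.ofFn (fun i : Fin (E - 1) =>
        T i * diagOf F (d ⟨i.val + 1, by have := i.isLt; omega⟩)))
      = (List.ofFn (fun i : Fin (E - 1) =>
        T i * diagOf F (d' ⟨i.val + 1, by have := i.isLt; omega⟩))) := by
    congr 1
    funext i
    rw [hrest _ (by intro h; simpa using congrArg Fin.val h)]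
  have hdiag : diagOf F (d ⟨0, hE⟩)
      = diagOf F (d ⟨0, hE⟩) * diagOf F (d' ⟨0, hE⟩) := by
    have hfun : (fun m => if d ⟨0, hE⟩ m then (1 : F) else 0)
        = fun m => (if d ⟨0, hE⟩ m then (1 : F) else 0) *
            (if d' ⟨0, hE⟩ m then (1 : F) else 0) := by
      funext m
      cases hdm : d ⟨0, hE⟩ m
      · simp
      · simp [h0 m hdm]
    simp only [diagOf]
    rw [Matrix.diagonal_mul_diagonal]
    exact congrArg Matrix.diagonal (by rw [← hfun])
  have key : lineH F hE d T = diagOf F (d ⟨0, hE⟩) * lineH F hE d' T := by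
    rw [lineH, lineH, ← hL, ← mul_assoc, ← hdiag]
  rw [key]
  exact Matrix.rank_mul_le_right _ _

/-- Rewriting `linePrRankGe` as a weighted sum over the Boolean cube `Fin E × Fin M → Bool`. -/
private lemma linePr_eq (F : Type) [Field F] [Fintype F] (M E : ℕ) (hE : 1 ≤ E)
    (ε : Fin E → ℝ) (t : ℕ) :
    linePrRankGe F M E hE ε t
      = ∑ D : Fin E × Fin M → Bool,
          (∏ p : Fin E × Fin M, (if D p then 1 - ε p.1 else ε p.1)) *
            (∑ T : Fin (E - 1) → Matrix (Fin M) (Fin M) F,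
              ((1 : ℝ) / (Fintype.card (Fin (E - 1) → Matrix (Fin M) (Fin M) F) : ℝ)) *
              (if t ≤ (lineH F hE (fun i m => D (i, m)) T).rank then 1 else 0)) := by
  rw [linePrRankGe]
  apply Fintype.sum_equiv (Equiv.curry (Fin E) (Fin M) Bool).symm
  intro d
  have hprod : (∏ p : Fin E × Fin M,
      (if (Equiv.curry (Fin E) (Fin M) Bool).symm d p then 1 - ε p.1 else ε p.1))
      = ∏ i, ∏ m, if d i m then 1 - ε i else ε i := by
    rw [Fintype.prod_prod_type]
    rfl
  rw [hprod, Finset.mul_sum]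
  apply Finset.sum_congr rfl
  intro T _
  have : (fun i m => (Equiv.curry (Fin E) (Fin M) Bool).symm d (i, m)) = d := rfl
  rw [this, mul_assoc]

/-- `Pr{rank ≥ t}` gets smaller when the erasure probability of the first edge increases. -/
private lemma linePr_anti (F : Type) [Field F] [Fintype F] (M E : ℕ) (hE : 1 ≤ E)
    (ε1 ε2 : Fin E → ℝ) (h01 : ∀ i, 0 ≤ ε1 i) (h11 : ∀ i, ε1 i ≤ 1)
    (h02 : ∀ i, 0 ≤ ε2 i) (h12 : ∀ i, ε2 i ≤ 1)
    (hle : ∀ i, ε1 i ≤ ε2 i) (hoff : ∀ i, i ≠ (⟨0, hE⟩ : Fin E) → ε1 i = ε2 i) (t : ℕ) :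
    linePrRankGe F M E hE ε2 t ≤ linePrRankGe F M E hE ε1 t := by
  rw [linePr_eq, linePr_eq]
  set c : ℝ := (1 : ℝ) / (Fintype.card (Fin (E - 1) → Matrix (Fin M) (Fin M) F) : ℝ) with hc
  have hc0 : 0 ≤ c := by positivity
  set P : (Fin E × Fin M → Bool) → ℝ := fun D =>
    ∑ T : Fin (E - 1) → Matrix (Fin M) (Fin M) F,
      c * (if t ≤ (lineH F hE (fun i m => D (i, m)) T).rank then 1 else 0) with hP
  have hP0 : ∀ D, 0 ≤ P D := by
    intro D
    apply Finset.sum_nonneg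
    intro T _
    apply mul_nonneg hc0
    split <;> norm_num
  exact chain_le P hP0
    (fun p b => if b then 1 - ε1 p.1 else ε1 p.1)
    (fun p b => if b then 1 - ε2 p.1 else ε2 p.1)
    (by intro j b; cases b <;> simp [h01 j.1, h11 j.1] <;> linarith [h11 j.1])
    (by intro j b; cases b <;> simp [h02 j.1, h12 j.1] <;> linarith [h12 j.1])
    (by
      rintro ⟨i0, m0⟩
      by_cases hi : i0 = (⟨0, hE⟩ : Fin E)
      · right
        refine ⟨by simp; linarith [hle i0], by simp; try linarith [hle i0]
                , ?_⟩
        intro D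
        apply Finset.sum_le_sum
        intro T _
        apply mul_le_mul_of_nonneg_left ?_ hc0
        have hrank : (lineH F hE
              (fun i m => Function.update D (i0, m0) false (i, m)) T).rank
            ≤ (lineH F hE (fun i m => Function.update D (i0, m0) true (i, m)) T).rank := by
          apply lineH_rank_mono F hE _ _ T
          · intro i hi'
            funext m
            have hne : (i, m) ≠ (i0, m0) := by
              intro h
              injection h with h1 h2
              exact hi' (h1.trans hi)
            rw [Function.update_of_ne hne, Function.update_of_ne hne]
          · intro m hm
            by_cases hmm : ((⟨0, hE⟩ : Fin E), m) = (i0, m0)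
            · rw [hmm, Function.update_self]
            · rw [Function.update_of_ne hmm] at hm ⊢
              exact hm
        split
        · rename_i h
          rw [if_pos (le_trans h hrank)]
        · split <;> norm_num
      · left
        funext b
        simp only
        rw [hoff i0 hi])

/-- The whole weight vanishes (or the rank does) when the first erasure prob. is 1. -/
private lemma linePr_one (F : Type) [Field F] [Fintype F] (M E : ℕ) (hE : 1 ≤ E)
    (ε : Fin E → ℝ) (hε0 : ε ⟨0, hE⟩ = 1) (t : ℕ) (ht : 1 ≤ t) :
    linePrRankGe F M E hE ε t = 0 := by
  rw [linePrRankGe]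
  apply Finset.sum_eq_zero
  intro d _
  apply Finset.sum_eq_zero
  intro T _
  by_cases hd : ∀ m, d ⟨0, hE⟩ m = false
  · have h0 : diagOf F (d ⟨0, hE⟩) = 0 := by
      rw [diagOf]
      have : (fun m => if d ⟨0, hE⟩ m then (1 : F) else 0) = fun _ => 0 := by
        funext m; simp [hd m]
      rw [this]
      exact Matrix.diagonal_zero
    have hH : lineH F hE d T = 0 := by rw [lineH, h0, zero_mul]
    rw [hH, Matrix.rank_zero, if_neg (by omega), mul_zero]
  · push_neg at hd
    obtain ⟨m, hm⟩ := hd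
    have hm' : d ⟨0, hE⟩ m = true := by simpa using hm
    have hW : (∏ i, ∏ m, if d i m then 1 - ε i else ε i) = 0 := by
      apply Finset.prod_eq_zero (Finset.mem_univ (⟨0, hE⟩ : Fin E))
      apply Finset.prod_eq_zero (Finset.mem_univ m)
      rw [hm', hε0]
      norm_num
    rw [hW, zero_mul, zero_mul]

/-- Continuity of the capacity in one erasure probability. -/
private lemma lineCap_cont (F : Type) [Field F] [Fintype F] (M E : ℕ) (hE : 1 ≤ E)
    (ε : Fin E → ℝ) (a : Fin E) :
    Continuous (fun x : ℝ => lineCap F M E hE (Function.update ε a x)) := by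
  unfold lineCap linePrRankGe
  apply continuous_finset_sum
  intro t _
  apply continuous_finset_sum
  intro d _
  apply continuous_finset_sum
  intro T _
  refine (Continuous.mul ?_ continuous_const).mul continuous_const
  apply continuous_finset_prod
  intro i _
  apply continuous_finset_prod
  intro m _
  have hc : Continuous fun x : ℝ => Function.update ε a x i := by
    by_cases h : i = a
    · subst h; simpa [Function.update_self] using continuous_id'
    · simpa [Function.update_of_ne h] using (continuous_const : Continuous fun _ : ℝ => ε i)
  cases hd : d i m
  · simpa [hd] using hc
  · simp only [hd, if_true]; exact continuous_const.sub hc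

/-- **Admissibility of RLNC over a line network.**  For every
`ε ∈ [0,1]^E` and every real `C′` with `0 ≤ C′ ≤ C(ε)` there exists `ε′ ∈ [0,1]^E` with
`ε ≤ ε′` componentwise such that `C(ε′) = C′` and the rank distribution induced by `ε′`
is dominated by that of `ε`: `Pr{rank(H(ε′)) ≥ t} ≤ Pr{rank(H(ε)) ≥ t}` for every
`t = 0, 1, …, M`. -/
theorem line_network_rlnc_admissible
    (q M E : ℕ) (hq : IsPrimePow q) (hM : 1 ≤ M) (hE : 2 ≤ E)
    (F : Type) [Field F] [Fintype F] (hF : Fintype.card F = q)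
    (ε : Fin E → ℝ) (hε : ∀ i, 0 ≤ ε i ∧ ε i ≤ 1)
    (C' : ℝ) (hC0 : 0 ≤ C') (hCle : C' ≤ lineCap F M E (by omega) ε) :
    ∃ ε' : Fin E → ℝ,
      (∀ i, ε i ≤ ε' i) ∧ (∀ i, ε' i ≤ 1) ∧
      lineCap F M E (by omega) ε' = C' ∧
      ∀ t : ℕ, t ≤ M →
        linePrRankGe F M E (by omega) ε' t ≤ linePrRankGe F M E (by omega) ε t := by
  have hE1 : 1 ≤ E := by omega
  set e0 : Fin E := ⟨0, hE1⟩ with he0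
  set g : ℝ → ℝ := fun x => lineCap F M E hE1 (Function.update ε e0 x) with hg
  have hcont : ContinuousOn g (Set.Icc (ε e0) 1) :=
    (lineCap_cont F M E hE1 ε e0).continuousOn
  have hg1 : g 1 = 0 := by
    rw [hg]
    simp only
    rw [lineCap]
    apply Finset.sum_eq_zero
    intro t ht
    exact linePr_one F M E hE1 _ (Function.update_self e0 1 ε) t (Finset.mem_Icc.1 ht).1
  have hge : g (ε e0) = lineCap F M E hE1 ε := by
    rw [hg]
    simp only [Function.update_eq_self]
  have hmem : C' ∈ Set.Icc (g 1) (g (ε e0)) := by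
    rw [hg1, hge]
    exact ⟨hC0, hCle⟩
  obtain ⟨x, hx, hgx⟩ := intermediate_value_Icc' (hε e0).2 hcont hmem
  refine ⟨Function.update ε e0 x, ?_, ?_, hgx, ?_⟩
  · intro i
    by_cases h : i = e0
    · subst h; rw [Function.update_self]; exact hx.1
    · rw [Function.update_of_ne h]
  · intro i
    by_cases h : i = e0
    · subst h; rw [Function.update_self]; exact hx.2
    · rw [Function.update_of_ne h]; exact (hε i).2
  · intro t _
    apply linePr_anti F M E hE1 ε (Function.update ε e0 x)
      (fun i => (hε i).1) (fun i => (hε i).2)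
    · intro i
      by_cases h : i = e0
      · subst h; rw [Function.update_self]; exact le_trans (hε e0).1 hx.1
      · rw [Function.update_of_ne h]; exact (hε i).1
    · intro i
      by_cases h : i = e0
      · subst h; rw [Function.update_self]; exact hx.2
      · rw [Function.update_of_ne h]; exact (hε i).2
    · intro i
      by_cases h : i = e0
      · subst h; rw [Function.update_self]; exact hx.1
      · rw [Function.update_of_ne h]
    · intro i hi
      rw [Function.update_of_ne hi]
end
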